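/- arXiv:2110.12722 — 6 statements merged into one kernel-verified Lean document; each statement's English description precedes it below -/
import Mathlib

section
/- Let ρ > 2, δ > 1 and c > 0 be constants, and let (λ_j)_{j≥1} be a sequence of positive real numbers such that λ_j² ≤ c·j^{−ρ} and λ_j² − λ_{j+1}² ≥ c^{−1}·j^{−ρ−1} for every j ≥ 1. Then there exists a constant C > 0, depending only on c, ρ and δ, such that for every j ≥ 1 the series Σ_{ℓ≥1, ℓ≠j} λ_ℓ²·ℓ^{−δ}/(λ_j² − λ_ℓ²)² converges and its sum is at most C·max{j^{ρ}, j^{ρ+2−δ}}. -/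
open Real

private lemma rpow_sq' {x : ℝ} (hx : 0 ≤ x) (a : ℝ) : (x ^ a) ^ 2 = x ^ (2 * a) := by
  rw [← Real.rpow_natCast (x ^ a) 2, ← Real.rpow_mul hx]
  congr 1
  push_cast
  ring

private lemma rpow_two_eq (x : ℝ) : x ^ (2 : ℝ) = x ^ 2 := by
  rw [show (2 : ℝ) = ((2 : ℕ) : ℝ) by norm_num, Real.rpow_natCast]

private lemma helper_div {c H E N D A B : ℝ} (hc : 0 < c) (hH : 0 < H) (hE : 0 < E)
    (hN : 0 ≤ N) (hA : 0 ≤ A) (hNA : N ≤ c * A) (hGD : (c⁻¹ * H) ^ 2 ≤ D)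
    (hcore : c ^ 3 * (A * E) ≤ B * H ^ 2) :
    N / D ≤ B * E⁻¹ := by
  have hG2 : (0 : ℝ) < (c⁻¹ * H) ^ 2 := by positivity
  have h1 : N / D ≤ (c * A) / (c⁻¹ * H) ^ 2 :=
    div_le_div₀ (by positivity) hNA hG2 hGD
  have h2 : (c * A) / (c⁻¹ * H) ^ 2 ≤ B * E⁻¹ := by
    rw [div_le_iff₀ hG2]
    have h3 := mul_le_mul_of_nonneg_right hcore
      (by positivity : (0 : ℝ) ≤ E⁻¹ * (c⁻¹) ^ 2)
    calc c * A = c ^ 3 * (A * E) * (E⁻¹ * (c⁻¹) ^ 2) := by field_simp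
      _ ≤ B * H ^ 2 * (E⁻¹ * (c⁻¹) ^ 2) := h3
      _ = B * E⁻¹ * (c⁻¹ * H) ^ 2 := by ring
  linarith

private lemma gap_telescope {ρ c : ℝ} (hρ : 2 < ρ) (hc : 0 < c) (lam : ℕ → ℝ)
    (hgap : ∀ j : ℕ, 1 ≤ j → c⁻¹ * (j : ℝ) ^ (-ρ - 1) ≤ (lam j) ^ 2 - (lam (j + 1)) ^ 2) :
    ∀ m n : ℕ, 1 ≤ m → m ≤ n →
      c⁻¹ * ((n : ℝ) - (m : ℝ)) * (n : ℝ) ^ (-ρ - 1) ≤ lam m ^ 2 - lam n ^ 2 := by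
  intro m n hm hmn
  induction n, hmn using Nat.le_induction with
  | base => simp
  | succ n hmn ih =>
    have hn1 : 1 ≤ n := le_trans hm hmn
    have hnpos : (0 : ℝ) < n := by exact_mod_cast hn1
    have hstep := hgap n hn1
    have hbase : ((n : ℝ) + 1) ^ (-ρ - 1) ≤ (n : ℝ) ^ (-ρ - 1) :=
      Real.rpow_le_rpow_of_nonpos hnpos (by linarith) (by linarith)
    have hmn' : (m : ℝ) ≤ n := by exact_mod_cast hmn
    have hci : (0 : ℝ) < c⁻¹ := inv_pos.mpr hc
    have h1 : c⁻¹ * ((n : ℝ) + 1 - m) * ((n : ℝ) + 1) ^ (-ρ - 1)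
        ≤ c⁻¹ * ((n : ℝ) - m) * (n : ℝ) ^ (-ρ - 1) + c⁻¹ * (n : ℝ) ^ (-ρ - 1) := by
      nlinarith [mul_nonneg (mul_nonneg hci.le
        (show (0 : ℝ) ≤ (n : ℝ) + 1 - m by linarith)) (sub_nonneg.2 hbase)]
    push_cast
    linarith

private lemma Q_antitone {ρ c : ℝ} (hρ : 2 < ρ) (hc : 0 < c) (lam : ℕ → ℝ)
    (hgap : ∀ j : ℕ, 1 ≤ j → c⁻¹ * (j : ℝ) ^ (-ρ - 1) ≤ (lam j) ^ 2 - (lam (j + 1)) ^ 2) :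
    ∀ m n : ℕ, 1 ≤ m → m ≤ n → lam n ^ 2 ≤ lam m ^ 2 := by
  intro m n hm hmn
  have h := gap_telescope hρ hc lam hgap m n hm hmn
  have hmn' : (m : ℝ) ≤ n := by exact_mod_cast hmn
  have : (0 : ℝ) ≤ c⁻¹ * ((n : ℝ) - m) * (n : ℝ) ^ (-ρ - 1) :=
    mul_nonneg (mul_nonneg (inv_pos.mpr hc).le (by linarith)) (Real.rpow_nonneg (by positivity) _)
  linarith


set_option maxHeartbeats 1600000 in
private lemma key_bound (ρ δ c : ℝ) (hρ : 2 < ρ) (hδ : 1 < δ) (hc : 0 < c) (lam : ℕ → ℝ)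
    (hupper : ∀ j : ℕ, 1 ≤ j → (lam j) ^ 2 ≤ c * (j : ℝ) ^ (-ρ))
    (hgap : ∀ j : ℕ, 1 ≤ j → c⁻¹ * (j : ℝ) ^ (-ρ - 1) ≤ (lam j) ^ 2 - (lam (j + 1)) ^ 2)
    (j ℓ : ℕ) (hj : 1 ≤ j) (hl : 1 ≤ ℓ) (hne : ℓ ≠ j) :
    lam ℓ ^ 2 * (ℓ : ℝ) ^ (-δ) / (lam j ^ 2 - lam ℓ ^ 2) ^ 2 ≤
      (c ^ 3 * (2 : ℝ) ^ (2 * ρ + 2 + δ)) * (max ((j : ℝ) ^ ρ) ((j : ℝ) ^ (ρ + 2 - δ)))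
        * (((ℓ : ℝ) - (j : ℝ)) ^ 2)⁻¹ := by
  set J : ℝ := (j : ℝ) with hJdef
  set e : ℝ := (ℓ : ℝ) with hedef
  set M : ℝ := max (J ^ ρ) (J ^ (ρ + 2 - δ)) with hMdef
  have hJ1 : (1 : ℝ) ≤ J := by rw [hJdef]; exact_mod_cast hj
  have he1 : (1 : ℝ) ≤ e := by rw [hedef]; exact_mod_cast hl
  have hJ0 : (0 : ℝ) < J := by linarith
  have he0 : (0 : ℝ) < e := by linarith
  have hneR : e ≠ J := by rw [hedef, hJdef]; exact_mod_cast hne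
  have hE : (0 : ℝ) < (e - J) ^ 2 := by
    rw [← sq_abs]; exact pow_pos (abs_pos.mpr (sub_ne_zero.mpr hneR)) 2
  have hA : (0 : ℝ) ≤ e ^ (-ρ - δ) := Real.rpow_nonneg he0.le _
  have hN : (0 : ℝ) ≤ lam ℓ ^ 2 * e ^ (-δ) := by positivity
  have hNA : lam ℓ ^ 2 * e ^ (-δ) ≤ c * e ^ (-ρ - δ) := by
    have h := hupper ℓ hl
    have h2 : lam ℓ ^ 2 * e ^ (-δ) ≤ c * e ^ (-ρ) * e ^ (-δ) :=
      mul_le_mul_of_nonneg_right h (Real.rpow_nonneg he0.le _)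
    have h3 : c * e ^ (-ρ) * e ^ (-δ) = c * e ^ (-ρ - δ) := by
      rw [mul_assoc, ← Real.rpow_add he0, show -ρ + -δ = -ρ - δ from by ring]
    linarith
  -- log facts
  set le' : ℝ := Real.log e with hle'
  set lJ : ℝ := Real.log J with hlJ
  set L2 : ℝ := Real.log 2 with hL2
  have hle0 : 0 ≤ le' := Real.log_nonneg he1
  have hlJ0 : 0 ≤ lJ := Real.log_nonneg hJ1
  have hL20 : 0 ≤ L2 := Real.log_nonneg one_le_two
  have h2pos : (0 : ℝ) < 2 := two_pos
  have hMsel1 : J ^ ρ ≤ M := le_max_left _ _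
  have hMsel2 : J ^ (ρ + 2 - δ) ≤ M := le_max_right _ _
  have hC3 : (0 : ℝ) ≤ c ^ 3 := by positivity
  clear_value J e M
  rcases lt_or_gt_of_ne hne with hlt | hgt
  · -- ℓ < j
    have heJ : e + 1 ≤ J := by
      rw [hedef, hJdef]; exact_mod_cast hlt
    have hlelJ : le' ≤ lJ := Real.log_le_log he0 (by linarith)
    have hE2 : (e - J) ^ 2 ≤ J ^ (2 : ℝ) := by
      rw [rpow_two_eq]; nlinarith
    rcases le_or_gt (2 * ℓ) j with hsplit | hsplit
    · -- far left : H = 2^(-ρ-1) * e^(-ρ)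
      have hH : (0 : ℝ) < (2 : ℝ) ^ (-ρ - 1) * e ^ (-ρ) := by positivity
      apply helper_div hc hH hE hN hA hNA
      · -- gap bound
        have htel := gap_telescope hρ hc lam hgap ℓ (2 * ℓ) hl (by omega)
        have hcast : ((2 * ℓ : ℕ) : ℝ) = 2 * e := by rw [hedef]; push_cast; ring
        rw [hcast, ← hedef] at htel
        have hA2 : (2 : ℝ) ^ (-ρ - 1) * e ^ (-ρ) = (2 * e - e) * (2 * e) ^ (-ρ - 1) := by
          rw [Real.mul_rpow (by norm_num : (0 : ℝ) ≤ 2) he0.le]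
          have h := Real.rpow_add he0 1 (-ρ - 1)
          rw [Real.rpow_one] at h
          rw [show (1 : ℝ) + (-ρ - 1) = -ρ by ring] at h
          rw [h]; ring
        have hmono : lam j ^ 2 ≤ lam (2 * ℓ) ^ 2 :=
          Q_antitone hρ hc lam hgap (2 * ℓ) j (by omega) hsplit
        have hgaplow : c⁻¹ * ((2 : ℝ) ^ (-ρ - 1) * e ^ (-ρ)) ≤ lam ℓ ^ 2 - lam j ^ 2 := by
          rw [hA2]; rw [← mul_assoc]; linarith
        have hsq : (c⁻¹ * ((2 : ℝ) ^ (-ρ - 1) * e ^ (-ρ))) ^ 2 ≤ (lam ℓ ^ 2 - lam j ^ 2) ^ 2 := by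
          rw [sq, sq]
          exact mul_self_le_mul_self (by positivity) hgaplow
        have hflip : (lam ℓ ^ 2 - lam j ^ 2) ^ 2 = (lam j ^ 2 - lam ℓ ^ 2) ^ 2 := by ring
        linarith [hsq, hflip.le, hflip.ge]
      · -- core inequality
        have hH2 : ((2 : ℝ) ^ (-ρ - 1) * e ^ (-ρ)) ^ 2
            = (2 : ℝ) ^ (2 * (-ρ - 1)) * e ^ (2 * (-ρ)) := by
          rw [mul_pow, rpow_sq' (by norm_num : (0 : ℝ) ≤ 2), rpow_sq' he0.le]
        rcases le_or_gt δ ρ with hcase | hcase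
        · have hpure : e ^ (-ρ - δ) * J ^ (2 : ℝ) ≤
              (2 : ℝ) ^ (2 * ρ + 2 + δ) * J ^ (ρ + 2 - δ)
                * ((2 : ℝ) ^ (2 * (-ρ - 1)) * e ^ (2 * (-ρ))) := by
            simp only [Real.rpow_def_of_pos he0, Real.rpow_def_of_pos hJ0,
              Real.rpow_def_of_pos h2pos, ← Real.exp_add]
            rw [Real.exp_le_exp]
            nlinarith [mul_nonneg (sub_nonneg.2 hcase) (sub_nonneg.2 hlelJ),
              mul_nonneg (by linarith : (0 : ℝ) ≤ δ) hL20]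
          calc c ^ 3 * (e ^ (-ρ - δ) * (e - J) ^ 2)
              ≤ c ^ 3 * (e ^ (-ρ - δ) * J ^ (2 : ℝ)) := by
                apply mul_le_mul_of_nonneg_left _ hC3
                exact mul_le_mul_of_nonneg_left hE2 hA
            _ ≤ c ^ 3 * ((2 : ℝ) ^ (2 * ρ + 2 + δ) * J ^ (ρ + 2 - δ)
                * ((2 : ℝ) ^ (2 * (-ρ - 1)) * e ^ (2 * (-ρ)))) :=
                mul_le_mul_of_nonneg_left hpure hC3
            _ = (c ^ 3 * (2 : ℝ) ^ (2 * ρ + 2 + δ)) * J ^ (ρ + 2 - δ)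
                * ((2 : ℝ) ^ (-ρ - 1) * e ^ (-ρ)) ^ 2 := by rw [hH2]; ring
            _ ≤ (c ^ 3 * (2 : ℝ) ^ (2 * ρ + 2 + δ)) * M
                * ((2 : ℝ) ^ (-ρ - 1) * e ^ (-ρ)) ^ 2 := by
                apply mul_le_mul_of_nonneg_right _ (sq_nonneg _)
                exact mul_le_mul_of_nonneg_left hMsel2 (by positivity)
        · have hpure : e ^ (-ρ - δ) * J ^ (2 : ℝ) ≤
              (2 : ℝ) ^ (2 * ρ + 2 + δ) * J ^ ρ
                * ((2 : ℝ) ^ (2 * (-ρ - 1)) * e ^ (2 * (-ρ))) := by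
            simp only [Real.rpow_def_of_pos he0, Real.rpow_def_of_pos hJ0,
              Real.rpow_def_of_pos h2pos, ← Real.exp_add]
            rw [Real.exp_le_exp]
            nlinarith [mul_nonneg (by linarith : (0 : ℝ) ≤ δ - ρ) hle0,
              mul_nonneg (by linarith : (0 : ℝ) ≤ ρ - 2) hlJ0,
              mul_nonneg (by linarith : (0 : ℝ) ≤ δ) hL20]
          calc c ^ 3 * (e ^ (-ρ - δ) * (e - J) ^ 2)
              ≤ c ^ 3 * (e ^ (-ρ - δ) * J ^ (2 : ℝ)) := by
                apply mul_le_mul_of_nonneg_left _ hC3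
                exact mul_le_mul_of_nonneg_left hE2 hA
            _ ≤ c ^ 3 * ((2 : ℝ) ^ (2 * ρ + 2 + δ) * J ^ ρ
                * ((2 : ℝ) ^ (2 * (-ρ - 1)) * e ^ (2 * (-ρ)))) :=
                mul_le_mul_of_nonneg_left hpure hC3
            _ = (c ^ 3 * (2 : ℝ) ^ (2 * ρ + 2 + δ)) * J ^ ρ
                * ((2 : ℝ) ^ (-ρ - 1) * e ^ (-ρ)) ^ 2 := by rw [hH2]; ring
            _ ≤ (c ^ 3 * (2 : ℝ) ^ (2 * ρ + 2 + δ)) * M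
                * ((2 : ℝ) ^ (-ρ - 1) * e ^ (-ρ)) ^ 2 := by
                apply mul_le_mul_of_nonneg_right _ (sq_nonneg _)
                exact mul_le_mul_of_nonneg_left hMsel1 (by positivity)
    · -- middle left : H = (J - e) * J^(-ρ-1)
      have hH : (0 : ℝ) < (J - e) * J ^ (-ρ - 1) := by
        apply mul_pos (by linarith) (Real.rpow_pos_of_pos hJ0 _)
      apply helper_div hc hH hE hN hA hNA
      · have htel := gap_telescope hρ hc lam hgap ℓ j hl hlt.le
        rw [← hedef, ← hJdef] at htel
        have hgaplow : c⁻¹ * ((J - e) * J ^ (-ρ - 1)) ≤ lam ℓ ^ 2 - lam j ^ 2 := by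
          rw [← mul_assoc]; exact htel
        have hsq : (c⁻¹ * ((J - e) * J ^ (-ρ - 1))) ^ 2 ≤ (lam ℓ ^ 2 - lam j ^ 2) ^ 2 := by
          rw [sq, sq]
          exact mul_self_le_mul_self (by positivity) hgaplow
        have hflip : (lam ℓ ^ 2 - lam j ^ 2) ^ 2 = (lam j ^ 2 - lam ℓ ^ 2) ^ 2 := by ring
        linarith [hsq, hflip.le, hflip.ge]
      · have hJ2e : J ≤ 2 * e := by
          rw [hedef, hJdef]
          have : (j : ℝ) ≤ 2 * ℓ := by exact_mod_cast hsplit.le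
          push_cast at this ⊢; linarith
        have hlog2e : lJ ≤ L2 + le' := by
          have h1 : lJ ≤ Real.log (2 * e) := Real.log_le_log hJ0 hJ2e
          rw [Real.log_mul (by norm_num) (ne_of_gt he0)] at h1
          exact h1
        have hred : e ^ (-ρ - δ) ≤
            (2 : ℝ) ^ (2 * ρ + 2 + δ) * J ^ (ρ + 2 - δ) * J ^ (2 * (-ρ - 1)) := by
          simp only [Real.rpow_def_of_pos he0, Real.rpow_def_of_pos hJ0,
            Real.rpow_def_of_pos h2pos, ← Real.exp_add]
          rw [Real.exp_le_exp]
          nlinarith [mul_nonneg (by linarith : (0 : ℝ) ≤ ρ + δ)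
              (by linarith : (0 : ℝ) ≤ L2 + le' - lJ),
            mul_nonneg (by linarith : (0 : ℝ) ≤ ρ + 2) hL20]
        calc c ^ 3 * (e ^ (-ρ - δ) * (e - J) ^ 2)
            = (c ^ 3 * e ^ (-ρ - δ)) * (J - e) ^ 2 := by ring
          _ ≤ (c ^ 3 * ((2 : ℝ) ^ (2 * ρ + 2 + δ) * J ^ (ρ + 2 - δ) * J ^ (2 * (-ρ - 1))))
              * (J - e) ^ 2 := by
              apply mul_le_mul_of_nonneg_right _ (sq_nonneg _)
              exact mul_le_mul_of_nonneg_left hred hC3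
          _ = (c ^ 3 * (2 : ℝ) ^ (2 * ρ + 2 + δ)) * J ^ (ρ + 2 - δ)
              * ((J - e) * J ^ (-ρ - 1)) ^ 2 := by
              rw [mul_pow, rpow_sq' hJ0.le]; ring
          _ ≤ (c ^ 3 * (2 : ℝ) ^ (2 * ρ + 2 + δ)) * M
              * ((J - e) * J ^ (-ρ - 1)) ^ 2 := by
              apply mul_le_mul_of_nonneg_right _ (sq_nonneg _)
              exact mul_le_mul_of_nonneg_left hMsel2 (by positivity)
  · -- j < ℓ
    have heJ : J + 1 ≤ e := by
      rw [hedef, hJdef]; exact_mod_cast hgt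
    have hlJle : lJ ≤ le' := Real.log_le_log hJ0 (by linarith)
    rcases le_or_gt ℓ (2 * j) with hsplit | hsplit
    · -- middle right : H = (e - J) * e^(-ρ-1)
      have hH : (0 : ℝ) < (e - J) * e ^ (-ρ - 1) := by
        apply mul_pos (by linarith) (Real.rpow_pos_of_pos he0 _)
      apply helper_div hc hH hE hN hA hNA
      · have htel := gap_telescope hρ hc lam hgap j ℓ hj hgt.le
        rw [← hedef, ← hJdef] at htel
        have hgaplow : c⁻¹ * ((e - J) * e ^ (-ρ - 1)) ≤ lam j ^ 2 - lam ℓ ^ 2 := by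
          rw [← mul_assoc]; exact htel
        have hsq : (c⁻¹ * ((e - J) * e ^ (-ρ - 1))) ^ 2 ≤ (lam j ^ 2 - lam ℓ ^ 2) ^ 2 := by
          rw [sq, sq]
          exact mul_self_le_mul_self (by positivity) hgaplow
        have hflip : (lam j ^ 2 - lam ℓ ^ 2) ^ 2 = (lam ℓ ^ 2 - lam j ^ 2) ^ 2 := by ring
        linarith [hsq, hflip.le, hflip.ge]
      · have he2J : e ≤ 2 * J := by
          rw [hedef, hJdef]
          have : (ℓ : ℝ) ≤ 2 * j := by exact_mod_cast hsplit
          push_cast at this ⊢; linarith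
        have hlog2J : le' ≤ L2 + lJ := by
          have h1 : le' ≤ Real.log (2 * J) := Real.log_le_log he0 he2J
          rw [Real.log_mul (by norm_num) (ne_of_gt hJ0)] at h1
          exact h1
        have hred : e ^ (-ρ - δ) ≤
            (2 : ℝ) ^ (2 * ρ + 2 + δ) * J ^ (ρ + 2 - δ) * e ^ (2 * (-ρ - 1)) := by
          simp only [Real.rpow_def_of_pos he0, Real.rpow_def_of_pos hJ0,
            Real.rpow_def_of_pos h2pos, ← Real.exp_add]
          rw [Real.exp_le_exp]
          rcases le_or_gt δ (ρ + 2) with hcase | hcase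
          · nlinarith [mul_nonneg (by linarith : (0 : ℝ) ≤ ρ + 2 - δ)
                (by linarith : (0 : ℝ) ≤ L2 + lJ - le'),
              mul_nonneg (by linarith : (0 : ℝ) ≤ ρ + 2 * δ) hL20]
          · nlinarith [mul_nonneg (by linarith : (0 : ℝ) ≤ δ - ρ - 2)
                (by linarith : (0 : ℝ) ≤ le' - lJ),
              mul_nonneg (by linarith : (0 : ℝ) ≤ 2 * ρ + 2 + δ) hL20]
        calc c ^ 3 * (e ^ (-ρ - δ) * (e - J) ^ 2)
            = (c ^ 3 * e ^ (-ρ - δ)) * (e - J) ^ 2 := by ring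
          _ ≤ (c ^ 3 * ((2 : ℝ) ^ (2 * ρ + 2 + δ) * J ^ (ρ + 2 - δ) * e ^ (2 * (-ρ - 1))))
              * (e - J) ^ 2 := by
              apply mul_le_mul_of_nonneg_right _ (sq_nonneg _)
              exact mul_le_mul_of_nonneg_left hred hC3
          _ = (c ^ 3 * (2 : ℝ) ^ (2 * ρ + 2 + δ)) * J ^ (ρ + 2 - δ)
              * ((e - J) * e ^ (-ρ - 1)) ^ 2 := by
              rw [mul_pow, rpow_sq' he0.le]; ring
          _ ≤ (c ^ 3 * (2 : ℝ) ^ (2 * ρ + 2 + δ)) * M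
              * ((e - J) * e ^ (-ρ - 1)) ^ 2 := by
              apply mul_le_mul_of_nonneg_right _ (sq_nonneg _)
              exact mul_le_mul_of_nonneg_left hMsel2 (by positivity)
    · -- far right : H = 2^(-ρ-1) * J^(-ρ)
      have hH : (0 : ℝ) < (2 : ℝ) ^ (-ρ - 1) * J ^ (-ρ) := by positivity
      apply helper_div hc hH hE hN hA hNA
      · have htel := gap_telescope hρ hc lam hgap j (2 * j) hj (by omega)
        have hcast : ((2 * j : ℕ) : ℝ) = 2 * J := by rw [hJdef]; push_cast; ring
        rw [hcast, ← hJdef] at htel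
        have hA2 : (2 : ℝ) ^ (-ρ - 1) * J ^ (-ρ) = (2 * J - J) * (2 * J) ^ (-ρ - 1) := by
          rw [Real.mul_rpow (by norm_num : (0 : ℝ) ≤ 2) hJ0.le]
          have h := Real.rpow_add hJ0 1 (-ρ - 1)
          rw [Real.rpow_one] at h
          rw [show (1 : ℝ) + (-ρ - 1) = -ρ by ring] at h
          rw [h]; ring
        have hmono : lam ℓ ^ 2 ≤ lam (2 * j) ^ 2 :=
          Q_antitone hρ hc lam hgap (2 * j) ℓ (by omega) (by omega)
        have hgaplow : c⁻¹ * ((2 : ℝ) ^ (-ρ - 1) * J ^ (-ρ)) ≤ lam j ^ 2 - lam ℓ ^ 2 := by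
          rw [hA2]; rw [← mul_assoc]; linarith
        have hsq : (c⁻¹ * ((2 : ℝ) ^ (-ρ - 1) * J ^ (-ρ))) ^ 2 ≤ (lam j ^ 2 - lam ℓ ^ 2) ^ 2 := by
          rw [sq, sq]
          exact mul_self_le_mul_self (by positivity) hgaplow
        have hflip : (lam j ^ 2 - lam ℓ ^ 2) ^ 2 = (lam ℓ ^ 2 - lam j ^ 2) ^ 2 := by ring
        linarith [hsq, hflip.le, hflip.ge]
      · have hE2 : (e - J) ^ 2 ≤ e ^ (2 : ℝ) := by
          rw [rpow_two_eq]; nlinarith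
        have hH2 : ((2 : ℝ) ^ (-ρ - 1) * J ^ (-ρ)) ^ 2
            = (2 : ℝ) ^ (2 * (-ρ - 1)) * J ^ (2 * (-ρ)) := by
          rw [mul_pow, rpow_sq' (by norm_num : (0 : ℝ) ≤ 2), rpow_sq' hJ0.le]
        have hpure : e ^ (-ρ - δ) * e ^ (2 : ℝ) ≤
            (2 : ℝ) ^ (2 * ρ + 2 + δ) * J ^ (ρ + 2 - δ)
              * ((2 : ℝ) ^ (2 * (-ρ - 1)) * J ^ (2 * (-ρ))) := by
          simp only [Real.rpow_def_of_pos he0, Real.rpow_def_of_pos hJ0,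
            Real.rpow_def_of_pos h2pos, ← Real.exp_add]
          rw [Real.exp_le_exp]
          nlinarith [mul_nonneg (by linarith : (0 : ℝ) ≤ ρ + δ - 2)
              (by linarith : (0 : ℝ) ≤ le' - lJ),
            mul_nonneg (by linarith : (0 : ℝ) ≤ δ) hL20]
        calc c ^ 3 * (e ^ (-ρ - δ) * (e - J) ^ 2)
            ≤ c ^ 3 * (e ^ (-ρ - δ) * e ^ (2 : ℝ)) := by
              apply mul_le_mul_of_nonneg_left _ hC3
              exact mul_le_mul_of_nonneg_left hE2 hA
          _ ≤ c ^ 3 * ((2 : ℝ) ^ (2 * ρ + 2 + δ) * J ^ (ρ + 2 - δ)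
              * ((2 : ℝ) ^ (2 * (-ρ - 1)) * J ^ (2 * (-ρ)))) :=
              mul_le_mul_of_nonneg_left hpure hC3
          _ = (c ^ 3 * (2 : ℝ) ^ (2 * ρ + 2 + δ)) * J ^ (ρ + 2 - δ)
              * ((2 : ℝ) ^ (-ρ - 1) * J ^ (-ρ)) ^ 2 := by rw [hH2]; ring
          _ ≤ (c ^ 3 * (2 : ℝ) ^ (2 * ρ + 2 + δ)) * M
              * ((2 : ℝ) ^ (-ρ - 1) * J ^ (-ρ)) ^ 2 := by
              apply mul_le_mul_of_nonneg_right _ (sq_nonneg _)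
              exact mul_le_mul_of_nonneg_left hMsel2 (by positivity)


private lemma base_summable : Summable (fun n : ℕ => ((n : ℝ) ^ 2)⁻¹) :=
  Real.summable_nat_pow_inv.mpr one_lt_two

private lemma base_tsum_le : ∑' n : ℕ, ((n : ℝ) ^ 2)⁻¹ ≤ 2 := by
  have hzeta := hasSum_zeta_two
  have heq : ∑' n : ℕ, ((n : ℝ) ^ 2)⁻¹ = π ^ 2 / 6 := by
    rw [← hzeta.tsum_eq]; exact tsum_congr fun n => by rw [one_div]
  rw [heq]
  nlinarith [Real.pi_lt_d2, Real.pi_pos]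

private lemma F_summable (j : ℕ) :
    Summable (fun ℓ : ℕ => (((ℓ : ℝ) - (j : ℝ)) ^ 2)⁻¹) := by
  apply (summable_nat_add_iff (j + 1)).mp
  have h2 : Summable (fun n : ℕ => (((n : ℝ) + 1) ^ 2)⁻¹) := by
    apply ((summable_nat_add_iff 1).mpr base_summable).congr
    intro n; push_cast; ring
  apply h2.congr
  intro n; congr 2; push_cast; ring

private lemma F_tsum_le (j : ℕ) :
    ∑' ℓ : ℕ, (((ℓ : ℝ) - (j : ℝ)) ^ 2)⁻¹ ≤ 4 := by
  rw [← Summable.sum_add_tsum_nat_add (j + 1) (F_summable j)]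
  have hhead : ∑ ℓ ∈ Finset.range (j + 1), (((ℓ : ℝ) - (j : ℝ)) ^ 2)⁻¹ ≤ 2 := by
    have hcongr : ∑ ℓ ∈ Finset.range (j + 1), (((ℓ : ℝ) - (j : ℝ)) ^ 2)⁻¹
        = ∑ ℓ ∈ Finset.range (j + 1), (((j + 1 - 1 - ℓ : ℕ) : ℝ) ^ 2)⁻¹ := by
      apply Finset.sum_congr rfl
      intro ℓ hℓ
      have hle : ℓ ≤ j := by
        simpa [Nat.lt_succ_iff] using Finset.mem_range.mp hℓ
      congr 1
      rw [show j + 1 - 1 - ℓ = j - ℓ from by omega, Nat.cast_sub hle]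
      ring
    rw [hcongr, Finset.sum_range_reflect (fun k : ℕ => ((k : ℝ) ^ 2)⁻¹) (j + 1)]
    exact le_trans (Summable.sum_le_tsum _ (fun i _ => by positivity) base_summable) base_tsum_le
  have htail : ∑' n : ℕ, ((((n + (j + 1) : ℕ) : ℝ) - (j : ℝ)) ^ 2)⁻¹ ≤ 2 := by
    have heq : ∀ n : ℕ, ((((n + (j + 1) : ℕ) : ℝ) - (j : ℝ)) ^ 2)⁻¹
        = ((((n + 1 : ℕ) : ℝ)) ^ 2)⁻¹ := by
      intro n; congr 2; push_cast; ring
    rw [tsum_congr heq]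
    have h := Summable.sum_add_tsum_nat_add (f := fun n : ℕ => ((n : ℝ) ^ 2)⁻¹) 1 base_summable
    have hhead0 : ∑ i ∈ Finset.range 1, ((i : ℝ) ^ 2)⁻¹ = 0 := by simp
    rw [hhead0, zero_add] at h
    rw [h]
    exact base_tsum_le
  linarith [hhead, htail]


/-- Part (i) of the eigenvalue-gap summation lemma: for a positive sequence with
polynomially decaying squares and polynomially lower-bounded gaps, the gap-weighted
sum `Σ_{ℓ ≠ j} λ_ℓ² ℓ^{-δ} / (λ_j² - λ_ℓ²)²` is `O(max{j^ρ, j^{ρ+2-δ}})`. -/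
theorem eigenvalue_gap_sum_lemma_part_i
    (ρ δ c : ℝ) (hρ : 2 < ρ) (hδ : 1 < δ) (hc : 0 < c)
    (lam : ℕ → ℝ)
    (hpos : ∀ j : ℕ, 1 ≤ j → 0 < lam j)
    (hupper : ∀ j : ℕ, 1 ≤ j → (lam j) ^ 2 ≤ c * (j : ℝ) ^ (-ρ))
    (hgap : ∀ j : ℕ, 1 ≤ j → c⁻¹ * (j : ℝ) ^ (-ρ - 1) ≤ (lam j) ^ 2 - (lam (j + 1)) ^ 2) :
    ∃ C : ℝ, 0 < C ∧ ∀ j : ℕ, 1 ≤ j →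
      Summable (fun ℓ : ℕ => if 1 ≤ ℓ ∧ ℓ ≠ j then
          (lam ℓ) ^ 2 * (ℓ : ℝ) ^ (-δ) / ((lam j) ^ 2 - (lam ℓ) ^ 2) ^ 2 else 0) ∧
      (∑' ℓ : ℕ, if 1 ≤ ℓ ∧ ℓ ≠ j then
          (lam ℓ) ^ 2 * (ℓ : ℝ) ^ (-δ) / ((lam j) ^ 2 - (lam ℓ) ^ 2) ^ 2 else 0)
        ≤ C * max ((j : ℝ) ^ ρ) ((j : ℝ) ^ (ρ + 2 - δ)) := by
  set C0 : ℝ := c ^ 3 * (2 : ℝ) ^ (2 * ρ + 2 + δ) with hC0def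
  have hC0 : 0 < C0 := by positivity
  refine ⟨4 * C0, by positivity, fun j hj => ?_⟩
  set M : ℝ := max ((j : ℝ) ^ ρ) ((j : ℝ) ^ (ρ + 2 - δ)) with hMdef
  have hJ0 : (0 : ℝ) < (j : ℝ) := by exact_mod_cast hj
  have hM : 0 < M := lt_max_of_lt_left (Real.rpow_pos_of_pos hJ0 ρ)
  set f : ℕ → ℝ := fun ℓ : ℕ => if 1 ≤ ℓ ∧ ℓ ≠ j then
      (lam ℓ) ^ 2 * (ℓ : ℝ) ^ (-δ) / ((lam j) ^ 2 - (lam ℓ) ^ 2) ^ 2 else 0 with hfdef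
  have hnn : ∀ ℓ, 0 ≤ f ℓ := by
    intro ℓ
    rw [hfdef]
    dsimp only
    split_ifs with h
    · positivity
    · exact le_refl 0
  have hpt : ∀ ℓ, f ℓ ≤ (C0 * M) * (((ℓ : ℝ) - (j : ℝ)) ^ 2)⁻¹ := by
    intro ℓ
    rw [hfdef]
    dsimp only
    split_ifs with h
    · exact key_bound ρ δ c hρ hδ hc lam hupper hgap j ℓ hj h.1 h.2
    · exact mul_nonneg (mul_nonneg hC0.le hM.le) (by positivity)
  have hFs := (F_summable j).mul_left (C0 * M)
  have hsumf : Summable f := Summable.of_nonneg_of_le hnn hpt hFs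
  refine ⟨hsumf, ?_⟩
  calc ∑' ℓ, f ℓ ≤ ∑' ℓ : ℕ, (C0 * M) * (((ℓ : ℝ) - (j : ℝ)) ^ 2)⁻¹ :=
        Summable.tsum_le_tsum hpt hsumf hFs
    _ = (C0 * M) * ∑' ℓ : ℕ, (((ℓ : ℝ) - (j : ℝ)) ^ 2)⁻¹ := tsum_mul_left
    _ ≤ (C0 * M) * 4 := by
        apply mul_le_mul_of_nonneg_left (F_tsum_le j) (by positivity)
    _ = 4 * C0 * M := by ring
end

section
/- Let ρ > 2, δ > 1 and c > 0 be constants, and let (λ_j)_{j≥1} be a sequence of positive real numbers such that λ_j² ≤ c·j^{−ρ} and λ_j² − λ_{j+1}² ≥ c^{−1}·j^{−ρ−1} for every j ≥ 1. Then there exists a constant C > 0, depending only on c, ρ and δ, such that for every j ≥ 1 the series Σ_{ℓ≥1, ℓ≠j} λ_j²·ℓ^{−δ}/(λ_j² − λ_ℓ²)² converges and its sum is at most C·max{j^{ρ}, j^{ρ+2−δ}}. -/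
lemma sum_inv_sq_le' (n : ℕ) :
    ∑ i ∈ Finset.range n, (((i:ℝ)+1)^2)⁻¹ ≤ 2 - ((n:ℝ))⁻¹ := by
  induction n with
  | zero => norm_num
  | succ n ih =>
    rcases Nat.eq_zero_or_pos n with h|h
    · subst h; norm_num
    have hn : (0:ℝ) < n := by positivity
    rw [Finset.sum_range_succ]
    have h1 : (((n:ℝ)+1)^2)⁻¹ ≤ ((n:ℝ))⁻¹ - ((n:ℝ)+1)⁻¹ := by
      rw [inv_sub_inv (by positivity) (by positivity)]
      rw [div_eq_mul_inv]
      have h2 : (n:ℝ) * ((n:ℝ)+1) ≤ ((n:ℝ)+1)^2 := by nlinarith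
      have h3 := inv_anti₀ (by positivity : (0:ℝ) < (n:ℝ) * ((n:ℝ)+1)) h2
      nlinarith [h3]
    push_cast
    linarith

lemma sum_inv_sq_le (n : ℕ) : ∑ i ∈ Finset.range n, (((i:ℝ)+1)^2)⁻¹ ≤ 2 := by
  have h := sum_inv_sq_le' n
  have h2 : (0:ℝ) ≤ ((n:ℝ))⁻¹ := by positivity
  linarith

lemma aux_gj_sum (j n : ℕ) :
    ∑ i ∈ Finset.range n, (if i ≠ j then (((i:ℝ) - (j:ℝ))^2)⁻¹ else 0) ≤ 4 := by
  have hsplit : ∀ i : ℕ, (if i ≠ j then (((i:ℝ) - (j:ℝ))^2)⁻¹ else 0)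
      = (if i < j then (((i:ℝ) - (j:ℝ))^2)⁻¹ else 0)
        + (if j < i then (((i:ℝ) - (j:ℝ))^2)⁻¹ else 0) := by
    intro i
    rcases lt_trichotomy i j with h|h|h
    · rw [if_pos h.ne, if_pos h, if_neg (by omega), add_zero]
    · rw [if_neg (by omega), if_neg (by omega), if_neg (by omega), add_zero]
    · rw [if_pos h.ne', if_neg (by omega), if_pos h, zero_add]
  rw [Finset.sum_congr rfl (fun i _ => hsplit i), Finset.sum_add_distrib]
  have hL : ∑ i ∈ Finset.range n, (if i < j then (((i:ℝ) - (j:ℝ))^2)⁻¹ else 0) ≤ 2 := by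
    have h1 : ∑ i ∈ Finset.range n, (if i < j then (((i:ℝ) - (j:ℝ))^2)⁻¹ else 0)
        ≤ ∑ i ∈ Finset.range (n + j), (if i < j then (((i:ℝ) - (j:ℝ))^2)⁻¹ else 0) := by
      apply Finset.sum_le_sum_of_subset_of_nonneg (Finset.range_subset_range.2 (by omega))
      intro i _ _
      split <;> positivity
    have h2 : ∑ i ∈ Finset.range j, (if i < j then (((i:ℝ) - (j:ℝ))^2)⁻¹ else 0)
        = ∑ i ∈ Finset.range (n + j), (if i < j then (((i:ℝ) - (j:ℝ))^2)⁻¹ else 0) := by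
      apply Finset.sum_subset (Finset.range_subset_range.2 (by omega))
      intro x _ hx
      rw [if_neg (by simpa using hx)]
    have h3 : ∑ i ∈ Finset.range j, (if i < j then (((i:ℝ) - (j:ℝ))^2)⁻¹ else 0)
        = ∑ i ∈ Finset.range j, (((i:ℝ)+1)^2)⁻¹ := by
      rw [← Finset.sum_range_reflect (fun i => (((i:ℝ)+1)^2)⁻¹) j]
      apply Finset.sum_congr rfl
      intro i hi
      have hij : i < j := Finset.mem_range.1 hi
      rw [if_pos hij]
      have hcast : ((j - 1 - i : ℕ) : ℝ) = (j:ℝ) - (1 + i) := by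
        have : j - 1 - i = j - (1 + i) := by omega
        rw [this, Nat.cast_sub (by omega)]
        push_cast; ring
      rw [hcast]
      congr 1
      ring
    calc ∑ i ∈ Finset.range n, (if i < j then (((i:ℝ) - (j:ℝ))^2)⁻¹ else 0)
        ≤ ∑ i ∈ Finset.range (n + j), (if i < j then (((i:ℝ) - (j:ℝ))^2)⁻¹ else 0) := h1
      _ = ∑ i ∈ Finset.range j, (((i:ℝ)+1)^2)⁻¹ := by rw [← h2, h3]
      _ ≤ 2 := sum_inv_sq_le j
  have hR : ∑ i ∈ Finset.range n, (if j < i then (((i:ℝ) - (j:ℝ))^2)⁻¹ else 0) ≤ 2 := by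
    have h2 : ∑ i ∈ Finset.Ico (j+1) n, (if j < i then (((i:ℝ) - (j:ℝ))^2)⁻¹ else 0)
        = ∑ i ∈ Finset.range n, (if j < i then (((i:ℝ) - (j:ℝ))^2)⁻¹ else 0) := by
      apply Finset.sum_subset
      · intro x hx
        rw [Finset.mem_Ico] at hx
        exact Finset.mem_range.2 hx.2
      · intro x hx hx'
        rw [Finset.mem_range] at hx
        rw [Finset.mem_Ico] at hx'
        rw [if_neg (by omega)]
    rw [← h2, Finset.sum_Ico_eq_sum_range]
    have h3 : ∀ k ∈ Finset.range (n - (j+1)),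
        (if j < j + 1 + k then ((((j+1+k : ℕ):ℝ) - (j:ℝ))^2)⁻¹ else 0) = (((k:ℝ)+1)^2)⁻¹ := by
      intro k _
      rw [if_pos (by omega)]
      push_cast
      congr 1
      ring
    rw [Finset.sum_congr rfl h3]
    exact sum_inv_sq_le _
  linarith

set_option maxHeartbeats 2000000 in
/-- Part (i) of the eigenvalue-gap summation lemma: for a positive sequence with
polynomially decaying squares and polynomially lower-bounded gaps, the gap-weighted
sum `Σ_{ℓ ≠ j} λ_j² ℓ^{-δ} / (λ_j² - λ_ℓ²)²` is `O(max{j^ρ, j^{ρ+2-δ}})`. -/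
theorem eigenvalue_gap_sum_lemma_part_ii
    (ρ δ c : ℝ) (hρ : 2 < ρ) (hδ : 1 < δ) (hc : 0 < c)
    (lam : ℕ → ℝ)
    (hpos : ∀ j : ℕ, 1 ≤ j → 0 < lam j)
    (hupper : ∀ j : ℕ, 1 ≤ j → (lam j) ^ 2 ≤ c * (j : ℝ) ^ (-ρ))
    (hgap : ∀ j : ℕ, 1 ≤ j → c⁻¹ * (j : ℝ) ^ (-ρ - 1) ≤ (lam j) ^ 2 - (lam (j + 1)) ^ 2) :
    ∃ C : ℝ, 0 < C ∧ ∀ j : ℕ, 1 ≤ j →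
      Summable (fun ℓ : ℕ => if 1 ≤ ℓ ∧ ℓ ≠ j then
          (lam j) ^ 2 * (ℓ : ℝ) ^ (-δ) / ((lam j) ^ 2 - (lam ℓ) ^ 2) ^ 2 else 0) ∧
      (∑' ℓ : ℕ, if 1 ≤ ℓ ∧ ℓ ≠ j then
          (lam j) ^ 2 * (ℓ : ℝ) ^ (-δ) / ((lam j) ^ 2 - (lam ℓ) ^ 2) ^ 2 else 0)
        ≤ C * max ((j : ℝ) ^ ρ) ((j : ℝ) ^ (ρ + 2 - δ)) := by
  have hc' : (0:ℝ) < c⁻¹ := inv_pos.2 hc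
  -- Telescoped gap lemma
  have gap : ∀ a b : ℕ, 1 ≤ a → a ≤ b →
      c⁻¹ * ((b:ℝ) - (a:ℝ)) * (b:ℝ) ^ (-ρ - 1) ≤ lam a ^ 2 - lam b ^ 2 := by
    intro a b ha hab
    induction b, hab using Nat.le_induction with
    | base => simp
    | succ b hb ih =>
      have hb1 : 1 ≤ b := le_trans ha hb
      have hbpos : (0:ℝ) < (b:ℝ) := by exact_mod_cast hb1
      have h2 := hgap b hb1
      have hmono : ((b:ℝ)+1) ^ (-ρ - 1) ≤ (b:ℝ) ^ (-ρ - 1) :=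
        Real.rpow_le_rpow_of_nonpos hbpos (by linarith) (by linarith)
      have hba : (a:ℝ) ≤ (b:ℝ) + 1 := by
        have : a ≤ b + 1 := by omega
        exact_mod_cast this
      have key : c⁻¹ * (((b:ℝ)+1) - (a:ℝ)) * ((b:ℝ)+1) ^ (-ρ - 1)
          ≤ c⁻¹ * (((b:ℝ)+1) - (a:ℝ)) * (b:ℝ) ^ (-ρ - 1) := by
        apply mul_le_mul_of_nonneg_left hmono
        have h3 : (0:ℝ) ≤ ((b:ℝ)+1) - (a:ℝ) := by linarith
        exact mul_nonneg hc'.le h3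
      have expand : c⁻¹ * (((b:ℝ)+1) - (a:ℝ)) * (b:ℝ) ^ (-ρ - 1)
          = c⁻¹ * ((b:ℝ) - (a:ℝ)) * (b:ℝ) ^ (-ρ - 1) + c⁻¹ * (b:ℝ) ^ (-ρ - 1) := by ring
      push_cast
      calc c⁻¹ * (((b:ℝ)+1) - (a:ℝ)) * ((b:ℝ)+1) ^ (-ρ - 1)
          ≤ c⁻¹ * ((b:ℝ) - (a:ℝ)) * (b:ℝ) ^ (-ρ - 1) + c⁻¹ * (b:ℝ) ^ (-ρ - 1) := by
            rw [← expand]; exact key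
        _ ≤ (lam a ^ 2 - lam b ^ 2) + (lam b ^ 2 - lam (b+1) ^ 2) := add_le_add ih h2
        _ = lam a ^ 2 - lam (b+1) ^ 2 := by ring
  -- constants
  have hzsum : Summable (fun ℓ : ℕ => (ℓ:ℝ) ^ (-δ)) := Real.summable_nat_rpow.2 (by linarith)
  set Z := ∑' ℓ : ℕ, (ℓ:ℝ) ^ (-δ) with hZdef
  have hZ0 : 0 ≤ Z := tsum_nonneg (fun ℓ => Real.rpow_nonneg (Nat.cast_nonneg _) _)
  set G := c⁻¹ * (2:ℝ) ^ (-ρ - 1) with hGdef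
  have hG : 0 < G := by positivity
  set K := c / G^2 with hKdef
  have hK : 0 < K := by positivity
  set K' := K * (2:ℝ)^δ with hK'def
  have hK' : 0 < K' := by positivity
  have hGc : G ≤ c⁻¹ := by
    rw [hGdef]
    nth_rewrite 2 [← mul_one c⁻¹]
    exact mul_le_mul_of_nonneg_left
      (Real.rpow_le_one_of_one_le_of_nonpos (by norm_num) (by linarith)) hc'.le
  have hrpow_sq : ∀ (x e : ℝ), 0 ≤ x → (x^e)^2 = x^(e*2) := by
    intro x e hx
    rw [← Real.rpow_natCast (x^e) 2, ← Real.rpow_mul hx]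
    norm_num
  refine ⟨K * Z + 4 * K' + 1, by positivity, ?_⟩
  intro j hj
  have hJ0 : (0:ℝ) < (j:ℝ) := by exact_mod_cast hj
  have hJ1 : (1:ℝ) ≤ (j:ℝ) := by exact_mod_cast hj
  set J := (j:ℝ) with hJdef
  have hA0 : 0 < lam j ^ 2 := pow_pos (hpos j hj) 2
  set A := lam j ^ 2 with hAdef
  set f := fun ℓ : ℕ => if 1 ≤ ℓ ∧ ℓ ≠ j then
      A * (ℓ : ℝ) ^ (-δ) / (A - (lam ℓ) ^ 2) ^ 2 else 0 with hfdef
  set gj := fun ℓ : ℕ => if ℓ ≠ j then (((ℓ:ℝ) - J)^2)⁻¹ else 0 with hgjdef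
  set h := fun ℓ : ℕ => K * J^ρ * (ℓ:ℝ)^(-δ) + K' * J^(ρ+2-δ) * gj ℓ with hhdef
  have hgj_nonneg : ∀ ℓ, 0 ≤ gj ℓ := by
    intro ℓ; rw [hgjdef]; dsimp only; split <;> positivity
  have hf_nonneg : ∀ ℓ, 0 ≤ f ℓ := by
    intro ℓ; rw [hfdef]; dsimp only; split
    · apply div_nonneg (mul_nonneg hA0.le (Real.rpow_nonneg (Nat.cast_nonneg _) _)) (sq_nonneg _)
    · exact le_rfl
  -- monotonicity of lam^2
  have hmono2 : ∀ a b : ℕ, 1 ≤ a → a ≤ b → lam b ^ 2 ≤ lam a ^ 2 := by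
    intro a b ha hab
    have h1 := gap a b ha hab
    have h2 : (0:ℝ) ≤ c⁻¹ * ((b:ℝ) - (a:ℝ)) * (b:ℝ) ^ (-ρ - 1) := by
      have hba : (a:ℝ) ≤ (b:ℝ) := by exact_mod_cast hab
      have : (0:ℝ) ≤ (b:ℝ) - (a:ℝ) := by linarith
      positivity
    linarith
  -- far regime lower bound on the gap
  have hfar : ∀ ℓ : ℕ, 2*j ≤ ℓ → G * J^(-ρ) ≤ A - lam ℓ ^ 2 := by
    intro ℓ hℓ
    have h1 := gap j (2*j) hj (by omega)
    have h2 := hmono2 (2*j) ℓ (by omega) hℓ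
    have hcast : ((2*j : ℕ) : ℝ) = 2*J := by push_cast; ring
    rw [hcast] at h1
    have h3 : c⁻¹ * (2*J - J) * (2*J) ^ (-ρ - 1) = G * J^(-ρ) := by
      rw [Real.mul_rpow (by norm_num) hJ0.le, hGdef]
      have h4 : J * J ^ (-ρ - 1) = J ^ (-ρ) := by
        nth_rewrite 1 [← Real.rpow_one J]
        rw [← Real.rpow_add hJ0, show (1:ℝ) + (-ρ-1) = -ρ by ring]
      calc c⁻¹ * (2*J - J) * ((2:ℝ) ^ (-ρ - 1) * J ^ (-ρ - 1))
          = c⁻¹ * (2:ℝ) ^ (-ρ - 1) * (J * J ^ (-ρ - 1)) := by ring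
        _ = c⁻¹ * (2:ℝ) ^ (-ρ - 1) * J ^ (-ρ) := by rw [h4]
    rw [h3] at h1
    rw [hAdef]; linarith
  -- small regime lower bound on the gap
  have hsmall : ∀ ℓ : ℕ, 1 ≤ ℓ → 2*ℓ ≤ j → G * (ℓ:ℝ)^(-ρ) ≤ lam ℓ ^ 2 - A := by
    intro ℓ hℓ1 hℓ
    have hL0 : (0:ℝ) < (ℓ:ℝ) := by exact_mod_cast hℓ1
    have h1 := gap ℓ (2*ℓ) hℓ1 (by omega)
    have h2 := hmono2 (2*ℓ) j (by omega) hℓ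
    have hcast : ((2*ℓ : ℕ) : ℝ) = 2*(ℓ:ℝ) := by push_cast; ring
    rw [hcast] at h1
    have h3 : c⁻¹ * (2*(ℓ:ℝ) - (ℓ:ℝ)) * (2*(ℓ:ℝ)) ^ (-ρ - 1) = G * (ℓ:ℝ)^(-ρ) := by
      rw [Real.mul_rpow (by norm_num) hL0.le, hGdef]
      have h4 : (ℓ:ℝ) * (ℓ:ℝ) ^ (-ρ - 1) = (ℓ:ℝ) ^ (-ρ) := by
        nth_rewrite 1 [← Real.rpow_one (ℓ:ℝ)]
        rw [← Real.rpow_add hL0, show (1:ℝ) + (-ρ-1) = -ρ by ring]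
      calc c⁻¹ * (2*(ℓ:ℝ) - (ℓ:ℝ)) * ((2:ℝ) ^ (-ρ - 1) * (ℓ:ℝ) ^ (-ρ - 1))
          = c⁻¹ * (2:ℝ) ^ (-ρ - 1) * ((ℓ:ℝ) * (ℓ:ℝ) ^ (-ρ - 1)) := by ring
        _ = c⁻¹ * (2:ℝ) ^ (-ρ - 1) * (ℓ:ℝ) ^ (-ρ) := by rw [h4]
    rw [h3] at h1
    rw [hAdef]; linarith
  -- the pointwise bound
  have hfh : ∀ ℓ : ℕ, f ℓ ≤ h ℓ := by
    intro ℓ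
    have hh_nonneg : 0 ≤ h ℓ := by
      rw [hhdef]; dsimp only
      have := hgj_nonneg ℓ
      positivity
    by_cases hcase : 1 ≤ ℓ ∧ ℓ ≠ j
    · obtain ⟨hℓ1, hℓj⟩ := hcase
      have hL0 : (0:ℝ) < (ℓ:ℝ) := by exact_mod_cast hℓ1
      have hupj : A ≤ c * J ^ (-ρ) := hupper j hj
      have hLd0 : (0:ℝ) ≤ (ℓ:ℝ) ^ (-δ) := Real.rpow_nonneg hL0.le _
      have hnum : A * (ℓ:ℝ)^(-δ) ≤ (c * J^(-ρ)) * (ℓ:ℝ)^(-δ) :=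
        mul_le_mul_of_nonneg_right hupj hLd0
      have hfval : f ℓ = A * (ℓ:ℝ)^(-δ) / (A - lam ℓ ^ 2)^2 := by
        rw [hfdef]; dsimp only; rw [if_pos ⟨hℓ1, hℓj⟩]
      have hgjval : gj ℓ = (((ℓ:ℝ) - J)^2)⁻¹ := by
        rw [hgjdef]; dsimp only; rw [if_pos hℓj]
      rcases le_or_gt (2*j) ℓ with hfar' | hnf
      · -- far regime: bound by first summand
        have hE := hfar ℓ hfar'
        have hE0 : 0 < G * J^(-ρ) := by positivity
        have hE2 : (G * J^(-ρ))^2 ≤ (A - lam ℓ ^2)^2 := pow_le_pow_left₀ hE0.le hE 2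
        have hstep : A * (ℓ:ℝ)^(-δ) / (A - lam ℓ ^ 2)^2
            ≤ (c * J^(-ρ)) * (ℓ:ℝ)^(-δ) / (G * J^(-ρ))^2 := by
          apply div_le_div₀ (by positivity) hnum (by positivity) hE2
        have hcalc : (c * J^(-ρ)) * (ℓ:ℝ)^(-δ) / (G * J^(-ρ))^2 = K * J^ρ * (ℓ:ℝ)^(-δ) := by
          have hJρ : J^(-ρ) = (J^ρ)⁻¹ := Real.rpow_neg hJ0.le ρ
          have hJρ0 : (0:ℝ) < J^ρ := Real.rpow_pos_of_pos hJ0 ρ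
          rw [hKdef, hJρ]
          field_simp
        have hsecond : 0 ≤ K' * J^(ρ+2-δ) * gj ℓ := by
          have := hgj_nonneg ℓ; positivity
        rw [hfval, hhdef]
        dsimp only
        rw [hcalc] at hstep
        linarith
      rcases le_or_gt (2*ℓ) j with hsm' | hns
      · -- small regime: bound by first summand
        have hE := hsmall ℓ hℓ1 hsm'
        have hE0 : 0 < G * (ℓ:ℝ)^(-ρ) := by positivity
        have hE2 : (G * (ℓ:ℝ)^(-ρ))^2 ≤ (lam ℓ ^ 2 - A)^2 := pow_le_pow_left₀ hE0.le hE 2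
        have hE2' : (G * (ℓ:ℝ)^(-ρ))^2 ≤ (A - lam ℓ ^2)^2 := by
          calc (G * (ℓ:ℝ)^(-ρ))^2 ≤ (lam ℓ ^ 2 - A)^2 := hE2
            _ = (A - lam ℓ ^2)^2 := by ring
        have hstep : A * (ℓ:ℝ)^(-δ) / (A - lam ℓ ^ 2)^2
            ≤ (c * J^(-ρ)) * (ℓ:ℝ)^(-δ) / (G * (ℓ:ℝ)^(-ρ))^2 := by
          apply div_le_div₀ (by positivity) hnum (by positivity) hE2'
        have hLJ : (ℓ:ℝ) ≤ J := by
          rw [hJdef]; exact_mod_cast (by omega : ℓ ≤ j)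
        have hcalc : (c * J^(-ρ)) * (ℓ:ℝ)^(-δ) / (G * (ℓ:ℝ)^(-ρ))^2
            = K * (J^(-ρ) * (ℓ:ℝ)^(ρ*2)) * (ℓ:ℝ)^(-δ) := by
          rw [mul_pow, hrpow_sq (ℓ:ℝ) (-ρ) hL0.le,
            show (-ρ)*2 = -(ρ*2) by ring, Real.rpow_neg hL0.le (ρ*2),
            div_eq_mul_inv, mul_inv, inv_inv, hKdef, div_eq_mul_inv]
          ring
        have hmonL : (ℓ:ℝ)^(ρ*2) ≤ J^(ρ*2) :=
          Real.rpow_le_rpow hL0.le hLJ (by linarith)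
        have hstep2 : K * (J^(-ρ) * (ℓ:ℝ)^(ρ*2)) * (ℓ:ℝ)^(-δ)
            ≤ K * (J^(-ρ) * J^(ρ*2)) * (ℓ:ℝ)^(-δ) := by
          gcongr
        have hJcomb : J^(-ρ) * J^(ρ*2) = J^ρ := by
          rw [← Real.rpow_add hJ0, show -ρ + ρ*2 = ρ by ring]
        have hsecond : 0 ≤ K' * J^(ρ+2-δ) * gj ℓ := by
          have := hgj_nonneg ℓ; positivity
        rw [hfval, hhdef]
        dsimp only
        rw [hcalc] at hstep
        rw [hJcomb] at hstep2
        linarith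
      · -- middle regime: bound by second summand
        have hmne : (ℓ:ℝ) - J ≠ 0 := by
          rw [hJdef]
          intro hx
          exact hℓj (by exact_mod_cast sub_eq_zero.1 hx)
        have hm2 : (0:ℝ) < ((ℓ:ℝ) - J)^2 :=
          lt_of_le_of_ne (sq_nonneg _) (Ne.symm (pow_ne_zero 2 hmne))
        have hJr0 : (0:ℝ) < J^(-ρ-1) := Real.rpow_pos_of_pos hJ0 _
        have hE2 : G^2 * ((ℓ:ℝ) - J)^2 * (J^(-ρ-1))^2 ≤ (A - lam ℓ ^ 2)^2 := by
          rcases lt_or_gt_of_ne hℓj with hlj | hlj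
          · -- ℓ < j
            have h1 := gap ℓ j hℓ1 hlj.le
            have hJL : (ℓ:ℝ) < J := by rw [hJdef]; exact_mod_cast hlj
            have hE : G * (J - (ℓ:ℝ)) * J^(-ρ-1) ≤ lam ℓ ^ 2 - A := by
              have h2 : G * (J - (ℓ:ℝ)) * J^(-ρ-1) ≤ c⁻¹ * (J - (ℓ:ℝ)) * J^(-ρ-1) := by
                apply mul_le_mul_of_nonneg_right _ hJr0.le
                exact mul_le_mul_of_nonneg_right hGc (by linarith)
              rw [hAdef]
              calc G * (J - (ℓ:ℝ)) * J^(-ρ-1) ≤ c⁻¹ * (J - (ℓ:ℝ)) * J^(-ρ-1) := h2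
                _ ≤ lam ℓ ^ 2 - lam j ^ 2 := h1
            have hEpos : 0 < G * (J - (ℓ:ℝ)) * J^(-ρ-1) := by
              have h9 : (0:ℝ) < J - (ℓ:ℝ) := by linarith
              positivity
            have h3 := pow_le_pow_left₀ hEpos.le hE 2
            calc G^2 * ((ℓ:ℝ)-J)^2 * (J^(-ρ-1))^2
                = (G * (J - (ℓ:ℝ)) * J^(-ρ-1))^2 := by ring
              _ ≤ (lam ℓ ^ 2 - A)^2 := h3
              _ = (A - lam ℓ ^ 2)^2 := by ring
          · -- j < ℓ
            have h1 := gap j ℓ hj hlj.le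
            have hJL : J < (ℓ:ℝ) := by rw [hJdef]; exact_mod_cast hlj
            have hL2J : (ℓ:ℝ) ≤ 2*J := by
              rw [hJdef]
              have h4 : ℓ ≤ 2*j := by omega
              calc (ℓ:ℝ) ≤ ((2*j:ℕ):ℝ) := by exact_mod_cast h4
                _ = 2*(j:ℝ) := by push_cast; ring
            have hLr : (2*J)^(-ρ-1) ≤ (ℓ:ℝ)^(-ρ-1) :=
              Real.rpow_le_rpow_of_nonpos (by positivity) hL2J (by linarith)
            have h2Jsplit : (2*J)^(-ρ-1) = (2:ℝ)^(-ρ-1) * J^(-ρ-1) :=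
              Real.mul_rpow (by norm_num) hJ0.le
            have hd0 : (0:ℝ) ≤ (ℓ:ℝ) - J := by linarith
            have hE : G * ((ℓ:ℝ) - J) * J^(-ρ-1) ≤ A - lam ℓ ^ 2 := by
              have h5 : G * ((ℓ:ℝ) - J) * J^(-ρ-1)
                  = c⁻¹ * ((ℓ:ℝ) - J) * ((2*J)^(-ρ-1)) := by
                rw [h2Jsplit, hGdef]; ring
              have h6 : c⁻¹ * ((ℓ:ℝ) - J) * ((2*J)^(-ρ-1))
                  ≤ c⁻¹ * ((ℓ:ℝ) - J) * (ℓ:ℝ)^(-ρ-1) := by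
                apply mul_le_mul_of_nonneg_left hLr
                exact mul_nonneg hc'.le hd0
              rw [hAdef]
              calc G * ((ℓ:ℝ) - J) * J^(-ρ-1)
                  = c⁻¹ * ((ℓ:ℝ) - J) * ((2*J)^(-ρ-1)) := h5
                _ ≤ c⁻¹ * ((ℓ:ℝ) - J) * (ℓ:ℝ)^(-ρ-1) := h6
                _ ≤ lam j ^ 2 - lam ℓ ^ 2 := h1
            have hEpos : 0 < G * ((ℓ:ℝ) - J) * J^(-ρ-1) := by
              have h9 : (0:ℝ) < (ℓ:ℝ) - J := by linarith
              positivity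
            have h3 := pow_le_pow_left₀ hEpos.le hE 2
            calc G^2 * ((ℓ:ℝ)-J)^2 * (J^(-ρ-1))^2
                = (G * ((ℓ:ℝ) - J) * J^(-ρ-1))^2 := by ring
              _ ≤ (A - lam ℓ ^ 2)^2 := h3
        have hstep : A * (ℓ:ℝ)^(-δ) / (A - lam ℓ ^ 2)^2
            ≤ (c * J^(-ρ)) * (ℓ:ℝ)^(-δ) / (G^2 * ((ℓ:ℝ) - J)^2 * (J^(-ρ-1))^2) := by
          apply div_le_div₀ (by positivity) hnum (by positivity) hE2
        have hcalc : (c * J^(-ρ)) * (ℓ:ℝ)^(-δ) / (G^2 * ((ℓ:ℝ) - J)^2 * (J^(-ρ-1))^2)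
            = K * (J^(-ρ) * J^((ρ+1)*2)) * (ℓ:ℝ)^(-δ) * (((ℓ:ℝ) - J)^2)⁻¹ := by
          rw [hrpow_sq J (-ρ-1) hJ0.le, show (-ρ-1)*2 = -((ρ+1)*2) by ring,
            Real.rpow_neg hJ0.le ((ρ+1)*2),
            div_eq_mul_inv, mul_inv, mul_inv, inv_inv, hKdef, div_eq_mul_inv]
          ring
        have hJcomb2 : J^(-ρ) * J^((ρ+1)*2) = J^(ρ+2) := by
          rw [← Real.rpow_add hJ0, show -ρ + (ρ+1)*2 = ρ+2 by ring]
        have hLδ : (ℓ:ℝ)^(-δ) ≤ (2:ℝ)^δ * J^(-δ) := by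
          have hJ2L : J/2 ≤ (ℓ:ℝ) := by
            rw [hJdef]
            have h8 : j ≤ 2*ℓ := by omega
            have h9 : (j:ℝ) ≤ 2*(ℓ:ℝ) := by
              calc (j:ℝ) ≤ ((2*ℓ:ℕ):ℝ) := by exact_mod_cast h8
                _ = 2*(ℓ:ℝ) := by push_cast; ring
            linarith
          have h10 : (ℓ:ℝ)^(-δ) ≤ (J/2)^(-δ) :=
            Real.rpow_le_rpow_of_nonpos (by positivity) hJ2L (by linarith)
          have h11 : (J/2)^(-δ) = (2:ℝ)^δ * J^(-δ) := by
            rw [div_eq_mul_inv, Real.mul_rpow hJ0.le (by norm_num),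
              Real.inv_rpow (by norm_num : (0:ℝ) ≤ 2),
              Real.rpow_neg (by norm_num : (0:ℝ) ≤ 2) δ, inv_inv]
            ring
          rw [h11] at h10
          exact h10
        have hchain : K * (J^(-ρ) * J^((ρ+1)*2)) * (ℓ:ℝ)^(-δ) * (((ℓ:ℝ) - J)^2)⁻¹
            ≤ K * J^(ρ+2) * ((2:ℝ)^δ * J^(-δ)) * (((ℓ:ℝ) - J)^2)⁻¹ := by
          rw [hJcomb2]
          gcongr
        have hfinal : K * J^(ρ+2) * ((2:ℝ)^δ * J^(-δ)) * (((ℓ:ℝ) - J)^2)⁻¹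
            = K' * J^(ρ+2-δ) * gj ℓ := by
          rw [hgjval, hK'def]
          have h12 : J^(ρ+2) * J^(-δ) = J^(ρ+2-δ) := by
            rw [← Real.rpow_add hJ0, show ρ+2 + -δ = ρ+2-δ by ring]
          calc K * J^(ρ+2) * ((2:ℝ)^δ * J^(-δ)) * (((ℓ:ℝ) - J)^2)⁻¹
              = K * (2:ℝ)^δ * (J^(ρ+2) * J^(-δ)) * (((ℓ:ℝ) - J)^2)⁻¹ := by ring
            _ = K * (2:ℝ)^δ * J^(ρ+2-δ) * (((ℓ:ℝ) - J)^2)⁻¹ := by rw [h12]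
        have hfirst : 0 ≤ K * J^ρ * (ℓ:ℝ)^(-δ) := by positivity
        rw [hfval, hhdef]
        dsimp only
        rw [hcalc] at hstep
        linarith [hstep, hchain, hfinal.le, hfinal.ge]
    · rw [hfdef]; dsimp only; rw [if_neg hcase]; exact hh_nonneg
  -- summability and the sum bound
  have hh1 : Summable (fun ℓ : ℕ => K * J^ρ * (ℓ:ℝ)^(-δ)) := hzsum.mul_left _
  have hgjsum4 : ∀ n : ℕ, ∑ i ∈ Finset.range n, gj i ≤ 4 := by
    intro n
    rw [hgjdef, hJdef]
    exact aux_gj_sum j n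
  have hgjs : Summable gj := summable_of_sum_range_le hgj_nonneg hgjsum4
  have hh2 : Summable (fun ℓ : ℕ => K' * J^(ρ+2-δ) * gj ℓ) := hgjs.mul_left _
  have hhsum : Summable h := by rw [hhdef]; exact hh1.add hh2
  have hfs : Summable f := Summable.of_nonneg_of_le hf_nonneg hfh hhsum
  refine ⟨hfs, ?_⟩
  have ht : ∑' ℓ, f ℓ ≤ ∑' ℓ, h ℓ := Summable.tsum_le_tsum hfh hfs hhsum
  have hth : ∑' ℓ, h ℓ = K * J^ρ * Z + K' * J^(ρ+2-δ) * (∑' ℓ, gj ℓ) := by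
    rw [hhdef]
    rw [Summable.tsum_add hh1 hh2, tsum_mul_left, tsum_mul_left]
  have hgj4 : ∑' ℓ, gj ℓ ≤ 4 := Summable.tsum_le_of_sum_range_le hgjs hgjsum4
  have hgjT0 : 0 ≤ ∑' ℓ, gj ℓ := tsum_nonneg hgj_nonneg
  set M := max (J^ρ) (J^(ρ+2-δ)) with hMdef
  have hmax1 : J^ρ ≤ M := le_max_left _ _
  have hmax2 : J^(ρ+2-δ) ≤ M := le_max_right _ _
  have hJρ0 : (0:ℝ) ≤ J^ρ := Real.rpow_nonneg hJ0.le _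
  have hM0 : 0 ≤ M := le_trans hJρ0 hmax1
  have e1 : K * J^ρ * Z ≤ K * Z * M := by
    calc K * J^ρ * Z = (K*Z) * J^ρ := by ring
      _ ≤ (K*Z) * M := mul_le_mul_of_nonneg_left hmax1 (by positivity)
      _ = K * Z * M := by ring
  have e2 : K' * J^(ρ+2-δ) * (∑' ℓ, gj ℓ) ≤ 4 * K' * M := by
    have h13 : J^(ρ+2-δ) * (∑' ℓ, gj ℓ) ≤ M * 4 := mul_le_mul hmax2 hgj4 hgjT0 hM0
    calc K' * J^(ρ+2-δ) * (∑' ℓ, gj ℓ) = K' * (J^(ρ+2-δ) * (∑' ℓ, gj ℓ)) := by ring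
      _ ≤ K' * (M * 4) := mul_le_mul_of_nonneg_left h13 hK'.le
      _ = 4 * K' * M := by ring
  calc ∑' ℓ, f ℓ ≤ ∑' ℓ, h ℓ := ht
    _ = K * J^ρ * Z + K' * J^(ρ+2-δ) * (∑' ℓ, gj ℓ) := hth
    _ ≤ K * Z * M + 4 * K' * M := add_le_add e1 e2
    _ ≤ (K * Z + 4 * K' + 1) * M := by nlinarith [hM0]
end

section
/- Let H be a separable real Hilbert space, let (ĥ_j)_{j≥1} and (h_j)_{j≥1} be two Hilbert (orthonormal) bases of H, and let A : H → H be a bounded linear operator with Σ_{j≥1} ‖A h_j‖² < ∞. Then Σ_{j≥1} ‖A ĥ_j‖² = Σ_{j≥1} ‖A h_j‖², and for every K ≥ 1, | Σ_{j>K} ‖A ĥ_j‖² − Σ_{j>K} ‖A h_j‖² | ≤ 2·‖A‖_{op}²·Σ_{j=1}^{K} ‖ĥ_j − h_j‖. -/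
open scoped InnerProductSpace
open ENNReal

section aux
variable {H : Type*} [NormedAddCommGroup H] [InnerProductSpace ℝ H] [CompleteSpace H]

omit [CompleteSpace H] in
/-- Parseval in `ℝ≥0∞`. -/
lemma aux_parseval (b : HilbertBasis ℕ ℝ H) (x : H) :
    (∑' i : ℕ, ENNReal.ofReal (⟪x, b i⟫_ℝ ^ 2)) = ENNReal.ofReal (‖x‖ ^ 2) := by
  have h : HasSum (fun i => ⟪x, b i⟫_ℝ ^ 2) (‖x‖ ^ 2) := by
    have := b.hasSum_inner_mul_inner x x
    rw [← @inner_self_eq_norm_sq ℝ] at *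
    convert this using 2 with i
    · rfl
    · rw [sq, real_inner_comm x (b i)]
    · simp
  rw [← ENNReal.ofReal_tsum_of_nonneg (fun i => sq_nonneg _) h.summable, h.tsum_eq]

lemma aux_key (e f : HilbertBasis ℕ ℝ H) (A : H →L[ℝ] H) :
    (∑' i : ℕ, ENNReal.ofReal (‖A (e i)‖ ^ 2)) =
      (∑' j : ℕ, ENNReal.ofReal (‖(ContinuousLinearMap.adjoint A) (f j)‖ ^ 2)) := by
  calc (∑' i : ℕ, ENNReal.ofReal (‖A (e i)‖ ^ 2))
      = ∑' i : ℕ, ∑' j : ℕ, ENNReal.ofReal (⟪A (e i), f j⟫_ℝ ^ 2) := by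
        refine tsum_congr fun i => (aux_parseval f (A (e i))).symm
    _ = ∑' j : ℕ, ∑' i : ℕ, ENNReal.ofReal (⟪A (e i), f j⟫_ℝ ^ 2) := ENNReal.tsum_comm
    _ = ∑' j : ℕ, ENNReal.ofReal (‖(ContinuousLinearMap.adjoint A) (f j)‖ ^ 2) := by
        refine tsum_congr fun j => ?_
        rw [← aux_parseval e ((ContinuousLinearMap.adjoint A) (f j))]
        refine tsum_congr fun i => ?_
        rw [ContinuousLinearMap.adjoint_inner_left, real_inner_comm]

end aux

/-- Basis-change identity for the Hilbert–Schmidt norm, and the bound on the difference of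
tail sums of `‖A ·‖²` over two orthonormal bases in terms of the discrepancies of their
first `K` elements. -/
theorem hs_tail_sum_basis_change
    {H : Type*} [NormedAddCommGroup H] [InnerProductSpace ℝ H] [CompleteSpace H]
    (fhat g : HilbertBasis ℕ ℝ H) (A : H →L[ℝ] H)
    (hHS : Summable fun j : ℕ => ‖A (g j)‖ ^ 2) :
    (∑' j : ℕ, ‖A (fhat j)‖ ^ 2) = (∑' j : ℕ, ‖A (g j)‖ ^ 2) ∧
    ∀ K : ℕ, 1 ≤ K →
      |(∑' j : ℕ, if K ≤ j then ‖A (fhat j)‖ ^ 2 else 0) -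
          (∑' j : ℕ, if K ≤ j then ‖A (g j)‖ ^ 2 else 0)|
        ≤ 2 * ‖A‖ ^ 2 * ∑ j ∈ Finset.range K, ‖(fhat j : H) - g j‖ := by
  -- the ENNReal key equality
  have hkey : (∑' i : ℕ, ENNReal.ofReal (‖A (fhat i)‖ ^ 2)) =
      (∑' i : ℕ, ENNReal.ofReal (‖A (g i)‖ ^ 2)) := by
    rw [aux_key fhat g A, ← aux_key g g A]
  have hgfin : (∑' i : ℕ, ENNReal.ofReal (‖A (g i)‖ ^ 2)) ≠ ⊤ := by
    rw [← ENNReal.ofReal_tsum_of_nonneg (fun i => sq_nonneg _) hHS]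
    exact ENNReal.ofReal_ne_top
  -- summability of the fhat side
  have hcoe : ∀ x : H, ENNReal.ofReal (‖x‖ ^ 2) = ((‖x‖₊ ^ 2 : NNReal) : ℝ≥0∞) := by
    intro x
    rw [ENNReal.ofReal_pow (norm_nonneg _), ofReal_norm, enorm_eq_nnnorm, ENNReal.coe_pow]
  have hHSf : Summable fun j : ℕ => ‖A (fhat j)‖ ^ 2 := by
    have hne : (∑' i : ℕ, ((‖A (fhat i)‖₊ ^ 2 : NNReal) : ℝ≥0∞)) ≠ ⊤ := by
      simp only [← hcoe]
      rw [hkey]; exact hgfin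
    have hs := ENNReal.tsum_coe_ne_top_iff_summable.mp hne
    have := NNReal.summable_coe.mpr hs
    simpa using this
  have hEq : (∑' j : ℕ, ‖A (fhat j)‖ ^ 2) = (∑' j : ℕ, ‖A (g j)‖ ^ 2) := by
    have h1 : ENNReal.ofReal (∑' j : ℕ, ‖A (fhat j)‖ ^ 2)
        = ENNReal.ofReal (∑' j : ℕ, ‖A (g j)‖ ^ 2) := by
      rw [ENNReal.ofReal_tsum_of_nonneg (fun i => sq_nonneg _) hHSf,
        ENNReal.ofReal_tsum_of_nonneg (fun i => sq_nonneg _) hHS]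
      exact hkey
    have := (ENNReal.ofReal_eq_ofReal_iff
      (tsum_nonneg fun i => sq_nonneg _) (tsum_nonneg fun i => sq_nonneg _)).mp h1
    exact this
  refine ⟨hEq, fun K hK => ?_⟩
  -- tail = total - head
  have tail_eq : ∀ (a : ℕ → ℝ), Summable a →
      (∑' j : ℕ, if K ≤ j then a j else 0) = (∑' j : ℕ, a j) - ∑ j ∈ Finset.range K, a j := by
    intro a ha
    have hinj : Function.Injective (fun j : ℕ => j + K) := add_left_injective K
    have hsupp : Function.support (fun j : ℕ => if K ≤ j then a j else 0)
        ⊆ Set.range (fun j : ℕ => j + K) := by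
      intro x hx
      simp only [Function.mem_support] at hx
      by_cases h : K ≤ x
      · exact ⟨x - K, by simpa using Nat.sub_add_cancel h⟩
      · exact absurd (if_neg h) hx
    have h1 := hinj.tsum_eq (f := fun j : ℕ => if K ≤ j then a j else 0) hsupp
    have h2 : (∑' j : ℕ, if K ≤ j + K then a (j + K) else 0) = ∑' j : ℕ, a (j + K) := by
      refine tsum_congr fun j => if_pos (by omega)
    have h3 := Summable.sum_add_tsum_nat_add (f := a) K ha
    rw [← h1, h2]
    linarith [h3]
  rw [tail_eq _ hHSf, tail_eq _ hHS, hEq]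
  have habs : ∀ j : ℕ, |‖A (g j)‖ ^ 2 - ‖A (fhat j)‖ ^ 2| ≤ 2 * ‖A‖ ^ 2 * ‖(fhat j : H) - g j‖ := by
    intro j
    have hsum : ‖A (g j)‖ + ‖A (fhat j)‖ ≤ 2 * ‖A‖ := by
      have h1 : ‖A (g j)‖ ≤ ‖A‖ * ‖(g j : H)‖ := A.le_opNorm _
      have h2 : ‖A (fhat j)‖ ≤ ‖A‖ * ‖(fhat j : H)‖ := A.le_opNorm _
      rw [g.orthonormal.1 j] at h1
      rw [fhat.orthonormal.1 j] at h2
      push_cast at h1 h2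
      linarith
    have hdiff : |‖A (g j)‖ - ‖A (fhat j)‖| ≤ ‖A‖ * ‖(fhat j : H) - g j‖ := by
      have h1 := abs_norm_sub_norm_le (A (g j)) (A (fhat j))
      have h4 : ‖A (g j) - A (fhat j)‖ ≤ ‖A‖ * ‖(g j : H) - (fhat j : H)‖ := by
        rw [← map_sub]; exact A.le_opNorm _
      rw [norm_sub_rev]
      linarith
    have hfact : ‖A (g j)‖ ^ 2 - ‖A (fhat j)‖ ^ 2
        = (‖A (g j)‖ - ‖A (fhat j)‖) * (‖A (g j)‖ + ‖A (fhat j)‖) := by ring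
    rw [hfact, abs_mul, abs_of_nonneg (by positivity : (0:ℝ) ≤ ‖A (g j)‖ + ‖A (fhat j)‖)]
    calc |‖A (g j)‖ - ‖A (fhat j)‖| * (‖A (g j)‖ + ‖A (fhat j)‖)
        ≤ (‖A‖ * ‖(fhat j : H) - g j‖) * (2 * ‖A‖) :=
          mul_le_mul hdiff hsum (by positivity) (by positivity)
      _ = 2 * ‖A‖ ^ 2 * ‖(fhat j : H) - g j‖ := by ring
  have : |(∑' (j : ℕ), ‖A (g j)‖ ^ 2) - ∑ j ∈ Finset.range K, ‖A (fhat j)‖ ^ 2 -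
      ((∑' (j : ℕ), ‖A (g j)‖ ^ 2) - ∑ j ∈ Finset.range K, ‖A (g j)‖ ^ 2)|
      = |∑ j ∈ Finset.range K, (‖A (g j)‖ ^ 2 - ‖A (fhat j)‖ ^ 2)| := by
    rw [Finset.sum_sub_distrib]
    ring_nf
  rw [this]
  calc |∑ j ∈ Finset.range K, (‖A (g j)‖ ^ 2 - ‖A (fhat j)‖ ^ 2)|
      ≤ ∑ j ∈ Finset.range K, |‖A (g j)‖ ^ 2 - ‖A (fhat j)‖ ^ 2| :=
        Finset.abs_sum_le_sum_abs _ _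
    _ ≤ ∑ j ∈ Finset.range K, 2 * ‖A‖ ^ 2 * ‖(fhat j : H) - g j‖ :=
        Finset.sum_le_sum fun j _ => habs j
    _ = 2 * ‖A‖ ^ 2 * ∑ j ∈ Finset.range K, ‖(fhat j : H) - g j‖ := by
        rw [Finset.mul_sum]
end

section
/- Let H be a separable real Hilbert space, (Ω, 𝔉, μ) a probability space, and A : H → H a bounded linear operator. Let y°₀, y°₁, y°₂, e₀, e₁, e₂, ε₂ : Ω → H be strongly measurable maps, each square-integrable in the sense that ∫‖·‖² dμ < ∞, and suppose y°₂(ω) = A(y°₁(ω)) + ε₂(ω) for μ-almost every ω. Define the observed variables y_i = y°_i + e_i for i = 0, 1, 2 and the regression error u₂ = e₂ − A ∘ e₁ + ε₂. Assume that for every ζ ∈ H the following Bochner integrals vanish: ∫⟨y°₀, ζ⟩·e₁ dμ = ∫⟨y°₀, ζ⟩·e₂ dμ = ∫⟨y°₀, ζ⟩·ε₂ dμ = ∫⟨e₀, ζ⟩·e₁ dμ = ∫⟨e₀, ζ⟩·e₂ dμ = ∫⟨e₀, ζ⟩·ε₂ dμ = 0. Then for every ζ ∈ H, ∫_Ω ⟨y₀(ω),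 ζ⟩·u₂(ω) dμ(ω) = 0, and consequently ∫_Ω ⟨y₀(ω), ζ⟩·y₂(ω) dμ(ω) = A( ∫_Ω ⟨y₀(ω), ζ⟩·y₁(ω) dμ(ω) ). -/
open MeasureTheory

lemma integrable_inner_smul
    {H : Type*} [NormedAddCommGroup H] [InnerProductSpace ℝ H]
    {Ω : Type*} [MeasurableSpace Ω] {μ : Measure Ω}
    (f g : Ω → H) (hf : StronglyMeasurable f) (hg : StronglyMeasurable g)
    (hf2 : Integrable (fun ω => ‖f ω‖ ^ 2) μ)
    (hg2 : Integrable (fun ω => ‖g ω‖ ^ 2) μ) (ζ : H) :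
    Integrable (fun ω => (inner ℝ (f ω) ζ : ℝ) • g ω) μ := by
  have hmeas : AEStronglyMeasurable (fun ω => (inner ℝ (f ω) ζ : ℝ) • g ω) μ := by
    apply AEStronglyMeasurable.smul
    · exact (hf.inner stronglyMeasurable_const).aestronglyMeasurable
    · exact hg.aestronglyMeasurable
  refine Integrable.mono' (((hf2.add hg2).const_mul ‖ζ‖).div_const 2) hmeas ?_
  filter_upwards with ω
  have h1 : ‖(inner ℝ (f ω) ζ : ℝ) • g ω‖ ≤ ‖ζ‖ * (‖f ω‖ * ‖g ω‖) := by
    rw [norm_smul]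
    calc ‖(inner ℝ (f ω) ζ : ℝ)‖ * ‖g ω‖ ≤ (‖f ω‖ * ‖ζ‖) * ‖g ω‖ := by
          gcongr; exact norm_inner_le_norm _ _
      _ = ‖ζ‖ * (‖f ω‖ * ‖g ω‖) := by ring
  refine h1.trans ?_
  have h2 : ‖f ω‖ * ‖g ω‖ ≤ (‖f ω‖ ^ 2 + ‖g ω‖ ^ 2) / 2 := by nlinarith [sq_nonneg (‖f ω‖ - ‖g ω‖)]
  calc ‖ζ‖ * (‖f ω‖ * ‖g ω‖) ≤ ‖ζ‖ * ((‖f ω‖ ^ 2 + ‖g ω‖ ^ 2) / 2) := by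
        gcongr
    _ = ‖ζ‖ * (‖f ω‖ ^ 2 + ‖g ω‖ ^ 2) / 2 := by ring

lemma l2_add
    {H : Type*} [NormedAddCommGroup H]
    {Ω : Type*} [MeasurableSpace Ω] {μ : Measure Ω}
    {f g : Ω → H} (hf : StronglyMeasurable f) (hg : StronglyMeasurable g)
    (hf2 : Integrable (fun ω => ‖f ω‖ ^ 2) μ)
    (hg2 : Integrable (fun ω => ‖g ω‖ ^ 2) μ) :
    Integrable (fun ω => ‖f ω + g ω‖ ^ 2) μ := by
  refine Integrable.mono' ((hf2.add hg2).const_mul 2)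
    (((hf.add hg).norm.pow 2).aestronglyMeasurable) ?_
  filter_upwards with ω
  have h := norm_add_le (f ω) (g ω)
  have := norm_nonneg (f ω + g ω)
  rw [Real.norm_eq_abs, abs_of_nonneg (by positivity)]
  simp only [Pi.add_apply]
  nlinarith [sq_nonneg (‖f ω‖ - ‖g ω‖), norm_nonneg (f ω), norm_nonneg (g ω)]

lemma l2_clm
    {H : Type*} [NormedAddCommGroup H] [NormedSpace ℝ H]
    {Ω : Type*} [MeasurableSpace Ω] {μ : Measure Ω}
    (A : H →L[ℝ] H)
    {g : Ω → H} (hg : StronglyMeasurable g)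
    (hg2 : Integrable (fun ω => ‖g ω‖ ^ 2) μ) :
    Integrable (fun ω => ‖A (g ω)‖ ^ 2) μ := by
  refine Integrable.mono' (hg2.const_mul (‖A‖ ^ 2))
    (((A.continuous.comp_stronglyMeasurable hg).norm.pow 2).aestronglyMeasurable) ?_
  filter_upwards with ω
  rw [Real.norm_eq_abs, abs_of_nonneg (by positivity)]
  have h := A.le_opNorm (g ω)
  nlinarith [norm_nonneg (A (g ω)), norm_nonneg (g ω), norm_nonneg A]

/-- Modified Yule–Walker identity for a functional AR(1) model with measurement errors:
with latent AR law `y°₂ = A y°₁ + ε₂`, observations `y_i = y°_i + e_i` and error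
`u₂ = e₂ − A e₁ + ε₂`, the measurement-error orthogonality conditions imply that the
twice-lagged observation is a valid instrument: `E[y₀ ⊗ u₂] = 0` and
`E[y₀ ⊗ y₂] = A E[y₀ ⊗ y₁]`. -/
theorem modified_yule_walker
    {H : Type*} [NormedAddCommGroup H] [InnerProductSpace ℝ H] [CompleteSpace H]
    [TopologicalSpace.SeparableSpace H]
    {Ω : Type*} [MeasurableSpace Ω] (μ : Measure Ω) [IsProbabilityMeasure μ]
    (A : H →L[ℝ] H)
    (y0s y1s y2s e0 e1 e2 eps2 : Ω → H)
    (hy0s : StronglyMeasurable y0s) (hy1s : StronglyMeasurable y1s)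
    (hy2s : StronglyMeasurable y2s)
    (he0 : StronglyMeasurable e0) (he1 : StronglyMeasurable e1)
    (he2 : StronglyMeasurable e2) (heps2 : StronglyMeasurable eps2)
    (hy0s2 : Integrable (fun ω => ‖y0s ω‖ ^ 2) μ)
    (hy1s2 : Integrable (fun ω => ‖y1s ω‖ ^ 2) μ)
    (hy2s2 : Integrable (fun ω => ‖y2s ω‖ ^ 2) μ)
    (he02 : Integrable (fun ω => ‖e0 ω‖ ^ 2) μ)
    (he12 : Integrable (fun ω => ‖e1 ω‖ ^ 2) μ)
    (he22 : Integrable (fun ω => ‖e2 ω‖ ^ 2) μ)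
    (heps22 : Integrable (fun ω => ‖eps2 ω‖ ^ 2) μ)
    (hmodel : ∀ᵐ ω ∂μ, y2s ω = A (y1s ω) + eps2 ω)
    (h1 : ∀ ζ : H, (∫ ω, (inner ℝ (y0s ω) ζ : ℝ) • e1 ω ∂μ) = 0)
    (h2 : ∀ ζ : H, (∫ ω, (inner ℝ (y0s ω) ζ : ℝ) • e2 ω ∂μ) = 0)
    (h3 : ∀ ζ : H, (∫ ω, (inner ℝ (y0s ω) ζ : ℝ) • eps2 ω ∂μ) = 0)
    (h4 : ∀ ζ : H, (∫ ω, (inner ℝ (e0 ω) ζ : ℝ) • e1 ω ∂μ) = 0)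
    (h5 : ∀ ζ : H, (∫ ω, (inner ℝ (e0 ω) ζ : ℝ) • e2 ω ∂μ) = 0)
    (h6 : ∀ ζ : H, (∫ ω, (inner ℝ (e0 ω) ζ : ℝ) • eps2 ω ∂μ) = 0) :
    ∀ ζ : H,
      (∫ ω, (inner ℝ (y0s ω + e0 ω) ζ : ℝ) • (e2 ω - A (e1 ω) + eps2 ω) ∂μ) = 0 ∧
      (∫ ω, (inner ℝ (y0s ω + e0 ω) ζ : ℝ) • (y2s ω + e2 ω) ∂μ)
        = A (∫ ω, (inner ℝ (y0s ω + e0 ω) ζ : ℝ) • (y1s ω + e1 ω) ∂μ) := by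
  intro ζ
  -- measurability and L² facts for composite variables
  set f : Ω → H := fun ω => y0s ω + e0 ω with hfdef
  have hf : StronglyMeasurable f := hy0s.add he0
  have hf2 : Integrable (fun ω => ‖f ω‖ ^ 2) μ := l2_add hy0s he0 hy0s2 he02
  have hAe1 : StronglyMeasurable (fun ω => A (e1 ω)) :=
    A.continuous.comp_stronglyMeasurable he1
  have hAe12 : Integrable (fun ω => ‖A (e1 ω)‖ ^ 2) μ := l2_clm A he1 he12
  have hu : StronglyMeasurable (fun ω => e2 ω - A (e1 ω) + eps2 ω) :=
    (he2.sub hAe1).add heps2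
  have hu2 : Integrable (fun ω => ‖e2 ω - A (e1 ω) + eps2 ω‖ ^ 2) μ := by
    have h' : Integrable (fun ω => ‖e2 ω + -(A (e1 ω))‖ ^ 2) μ := by
      refine l2_add he2 hAe1.neg he22 ?_
      simpa using hAe12
    simp_rw [sub_eq_add_neg]
    exact l2_add (he2.add hAe1.neg) heps2 h' heps22
  have hg : StronglyMeasurable (fun ω => y1s ω + e1 ω) := hy1s.add he1
  have hg2 : Integrable (fun ω => ‖y1s ω + e1 ω‖ ^ 2) μ := l2_add hy1s he1 hy1s2 he12
  -- key: for either instrument component, E[⟨·,ζ⟩ u₂] = 0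
  have main : ∀ (w : Ω → H), StronglyMeasurable w → Integrable (fun ω => ‖w ω‖ ^ 2) μ →
      (∫ ω, (inner ℝ (w ω) ζ : ℝ) • e1 ω ∂μ) = 0 →
      (∫ ω, (inner ℝ (w ω) ζ : ℝ) • e2 ω ∂μ) = 0 →
      (∫ ω, (inner ℝ (w ω) ζ : ℝ) • eps2 ω ∂μ) = 0 →
      (∫ ω, (inner ℝ (w ω) ζ : ℝ) • (e2 ω - A (e1 ω) + eps2 ω) ∂μ) = 0 := by
    intro w hw hw2 hz1 hz2 hz3
    have I1 : Integrable (fun ω => (inner ℝ (w ω) ζ : ℝ) • e1 ω) μ :=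
      integrable_inner_smul w e1 hw he1 hw2 he12 ζ
    have I2 : Integrable (fun ω => (inner ℝ (w ω) ζ : ℝ) • e2 ω) μ :=
      integrable_inner_smul w e2 hw he2 hw2 he22 ζ
    have I3 : Integrable (fun ω => (inner ℝ (w ω) ζ : ℝ) • eps2 ω) μ :=
      integrable_inner_smul w eps2 hw heps2 hw2 heps22 ζ
    have IA : Integrable (fun ω => (inner ℝ (w ω) ζ : ℝ) • A (e1 ω)) μ := by
      refine (A.integrable_comp I1).congr (Filter.Eventually.of_forall fun ω => ?_)
      simp [_root_.map_smul]
    have hAint : (∫ ω, (inner ℝ (w ω) ζ : ℝ) • A (e1 ω) ∂μ)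
        = A (∫ ω, (inner ℝ (w ω) ζ : ℝ) • e1 ω ∂μ) := by
      rw [← A.integral_comp_comm I1]
      exact integral_congr_ae (Filter.Eventually.of_forall fun ω => by simp [_root_.map_smul])
    calc (∫ ω, (inner ℝ (w ω) ζ : ℝ) • (e2 ω - A (e1 ω) + eps2 ω) ∂μ)
        = ∫ ω, ((inner ℝ (w ω) ζ : ℝ) • e2 ω - (inner ℝ (w ω) ζ : ℝ) • A (e1 ω))
            + (inner ℝ (w ω) ζ : ℝ) • eps2 ω ∂μ := by
          simp only [smul_sub, smul_add]
      _ = ((∫ ω, (inner ℝ (w ω) ζ : ℝ) • e2 ω ∂μ)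
            - ∫ ω, (inner ℝ (w ω) ζ : ℝ) • A (e1 ω) ∂μ)
            + ∫ ω, (inner ℝ (w ω) ζ : ℝ) • eps2 ω ∂μ := by
          have Isub : Integrable (fun ω =>
              (inner ℝ (w ω) ζ : ℝ) • e2 ω - (inner ℝ (w ω) ζ : ℝ) • A (e1 ω)) μ := I2.sub IA
          rw [integral_add Isub I3, integral_sub I2 IA]
      _ = 0 := by rw [hz2, hz3, hAint, hz1, map_zero]; simp
  -- first conjunct
  have Iu_y : Integrable (fun ω => (inner ℝ (y0s ω) ζ : ℝ) • (e2 ω - A (e1 ω) + eps2 ω)) μ :=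
    integrable_inner_smul y0s _ hy0s hu hy0s2 hu2 ζ
  have Iu_e : Integrable (fun ω => (inner ℝ (e0 ω) ζ : ℝ) • (e2 ω - A (e1 ω) + eps2 ω)) μ :=
    integrable_inner_smul e0 _ he0 hu he02 hu2 ζ
  have first : (∫ ω, (inner ℝ (y0s ω + e0 ω) ζ : ℝ) • (e2 ω - A (e1 ω) + eps2 ω) ∂μ) = 0 := by
    calc (∫ ω, (inner ℝ (y0s ω + e0 ω) ζ : ℝ) • (e2 ω - A (e1 ω) + eps2 ω) ∂μ)
        = ∫ ω, (inner ℝ (y0s ω) ζ : ℝ) • (e2 ω - A (e1 ω) + eps2 ω)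
            + (inner ℝ (e0 ω) ζ : ℝ) • (e2 ω - A (e1 ω) + eps2 ω) ∂μ := by
          simp_rw [inner_add_left, add_smul]
      _ = (∫ ω, (inner ℝ (y0s ω) ζ : ℝ) • (e2 ω - A (e1 ω) + eps2 ω) ∂μ)
            + ∫ ω, (inner ℝ (e0 ω) ζ : ℝ) • (e2 ω - A (e1 ω) + eps2 ω) ∂μ :=
          integral_add Iu_y Iu_e
      _ = 0 := by
          rw [main y0s hy0s hy0s2 (h1 ζ) (h2 ζ) (h3 ζ),
            main e0 he0 he02 (h4 ζ) (h5 ζ) (h6 ζ), add_zero]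
  refine ⟨first, ?_⟩
  -- second conjunct
  have Ig : Integrable (fun ω => (inner ℝ (f ω) ζ : ℝ) • (y1s ω + e1 ω)) μ :=
    integrable_inner_smul f _ hf hg hf2 hg2 ζ
  have IAg : Integrable (fun ω => (inner ℝ (f ω) ζ : ℝ) • A (y1s ω + e1 ω)) μ := by
    refine (A.integrable_comp Ig).congr (Filter.Eventually.of_forall fun ω => ?_)
    simp [_root_.map_smul]
  have Iu : Integrable (fun ω => (inner ℝ (f ω) ζ : ℝ) • (e2 ω - A (e1 ω) + eps2 ω)) μ :=
    integrable_inner_smul f _ hf hu hf2 hu2 ζ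
  have haeq : ∀ᵐ ω ∂μ, (inner ℝ (y0s ω + e0 ω) ζ : ℝ) • (y2s ω + e2 ω)
      = (inner ℝ (f ω) ζ : ℝ) • A (y1s ω + e1 ω)
        + (inner ℝ (f ω) ζ : ℝ) • (e2 ω - A (e1 ω) + eps2 ω) := by
    filter_upwards [hmodel] with ω h
    rw [← smul_add]
    show (inner ℝ (f ω) ζ : ℝ) • _ = _
    congr 1
    rw [h, map_add]
    abel
  calc (∫ ω, (inner ℝ (y0s ω + e0 ω) ζ : ℝ) • (y2s ω + e2 ω) ∂μ)
      = ∫ ω, (inner ℝ (f ω) ζ : ℝ) • A (y1s ω + e1 ω)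
          + (inner ℝ (f ω) ζ : ℝ) • (e2 ω - A (e1 ω) + eps2 ω) ∂μ :=
        integral_congr_ae haeq
    _ = (∫ ω, (inner ℝ (f ω) ζ : ℝ) • A (y1s ω + e1 ω) ∂μ)
          + ∫ ω, (inner ℝ (f ω) ζ : ℝ) • (e2 ω - A (e1 ω) + eps2 ω) ∂μ :=
        integral_add IAg Iu
    _ = ∫ ω, (inner ℝ (f ω) ζ : ℝ) • A (y1s ω + e1 ω) ∂μ := by rw [first, add_zero]
    _ = A (∫ ω, (inner ℝ (y0s ω + e0 ω) ζ : ℝ) • (y1s ω + e1 ω) ∂μ) := by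
        rw [← A.integral_comp_comm Ig]
        exact integral_congr_ae (Filter.Eventually.of_forall fun ω => by simp [_root_.map_smul])
end

section
/- Let H be a separable real Hilbert space, (Ω, 𝔉, μ) a probability space, and X, Z : Ω → H strongly measurable with ∫‖X‖² dμ < ∞, ∫‖Z‖² dμ < ∞, ∫ X dμ = 0 and ∫ Z dμ = 0. Define the bounded linear operators C_xx, C_zz, C_xz : H → H by C_xx ζ = ∫⟨X, ζ⟩·X dμ, C_zz ζ = ∫⟨Z, ζ⟩·Z dμ, and C_xz ζ = ∫⟨X, ζ⟩·Z dμ (Bochner integrals), and let C_xx^{1/2} and C_zz^{1/2} denote the unique nonnegative self-adjoint bounded square roots of the nonnegative self-adjoint operators C_xx and C_zz. Then there exists a unique bounded linear operator R : H → H such that (i) C_zz^{1/2} ∘ R ∘ C_xx^{1/2} = C_xz, (ii) R ζ = 0 for every ζ orthogonal to the closure of the range of C_xx^{1/2}, and (iii) R* η = 0 for every η orthogonal to the closure of the range of C_zz^{1/2}. -/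
open MeasureTheory

open scoped RealInnerProductSpace

section AuxHilbert

variable {H : Type*} [NormedAddCommGroup H] [InnerProductSpace ℝ H] [CompleteSpace H]

/-- Anything orthogonal to the range of `S` is orthogonal to the closure of the range. -/
lemma baker_orth_closure (S : H →L[ℝ] H) (v : H) (hv : ∀ w : H, ⟪S w, v⟫ = 0)
    {u : H} (hu : u ∈ (LinearMap.range (S : H →ₗ[ℝ] H)).topologicalClosure) : ⟪u, v⟫ = 0 := by
  have hsub : ((LinearMap.range (S : H →ₗ[ℝ] H) : Submodule ℝ H) : Set H) ⊆ {x : H | ⟪x, v⟫ = 0} := by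
    intro x hx
    obtain ⟨w, rfl⟩ := LinearMap.mem_range.mp hx
    exact hv w
  have hclosed : IsClosed {x : H | ⟪x, v⟫ = 0} :=
    isClosed_eq (continuous_id.inner continuous_const) continuous_const
  have hu' : u ∈ closure ((LinearMap.range (S : H →ₗ[ℝ] H) : Submodule ℝ H) : Set H) := by
    rw [← Submodule.topologicalClosure_coe]; exact hu
  exact closure_minimal hsub hclosed hu'

/-- Extension lemma: a bounded operator `A` dominated by `S` factors through the closure of
the range of `S`, extended by zero on the orthogonal complement. -/
lemma baker_extend (S A : H →L[ℝ] H) (C : ℝ) (hC : 0 ≤ C)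
    (hb : ∀ ζ : H, ‖A ζ‖ ≤ C * ‖S ζ‖) :
    ∃ G : H →L[ℝ] H, (∀ ζ : H, G (S ζ) = A ζ) ∧
      (∀ u : H, (∀ w : H, ⟪S w, u⟫ = 0) → G u = 0) ∧
      (∀ P : Submodule ℝ H, IsClosed (P : Set H) → (∀ ζ, A ζ ∈ P) → ∀ u, G u ∈ P) := by
  classical
  set K := (LinearMap.range (S : H →ₗ[ℝ] H)).topologicalClosure with hKdef
  haveI : CompleteSpace K := (LinearMap.range (S : H →ₗ[ℝ] H)).isClosed_topologicalClosure.completeSpace_coe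
  -- well-definedness of the factorization
  have wd : ∀ ζ η : H, S ζ = S η → A ζ = A η := by
    intro ζ η h
    have h1 : ‖A ζ - A η‖ ≤ C * ‖S ζ - S η‖ := by
      rw [← map_sub, ← map_sub]; exact hb _
    rw [h, sub_self, norm_zero, mul_zero] at h1
    exact sub_eq_zero.mp (norm_le_zero_iff.mp h1)
  have hmem : ∀ u : LinearMap.range (S : H →ₗ[ℝ] H), ∃ ζ : H, S ζ = (u : H) :=
    fun u => LinearMap.mem_range.mp u.2
  set f0 : LinearMap.range (S : H →ₗ[ℝ] H) → H := fun u => A (hmem u).choose with hf0def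
  have hf0 : ∀ (u : LinearMap.range (S : H →ₗ[ℝ] H)) (ζ : H), S ζ = (u : H) → f0 u = A ζ := by
    intro u ζ h
    exact wd _ _ ((hmem u).choose_spec.trans h.symm)
  let fl : LinearMap.range (S : H →ₗ[ℝ] H) →ₗ[ℝ] H :=
    { toFun := f0
      map_add' := by
        intro u v
        show f0 (u + v) = f0 u + f0 v
        obtain ⟨a, ha⟩ := hmem u
        obtain ⟨b, hb'⟩ := hmem v
        rw [hf0 u a ha, hf0 v b hb', ← map_add]
        exact hf0 (u + v) (a + b) (by rw [map_add, ha, hb']; rfl)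
      map_smul' := by
        intro c u
        show f0 (c • u) = c • f0 u
        obtain ⟨a, ha⟩ := hmem u
        rw [hf0 u a ha, ← A.map_smul]
        exact hf0 (c • u) (c • a) (by rw [S.map_smul, ha]; rfl) }
  have hbd : ∀ u : LinearMap.range (S : H →ₗ[ℝ] H), ‖fl u‖ ≤ C * ‖u‖ := by
    intro u
    obtain ⟨a, ha⟩ := hmem u
    have h1 : fl u = A a := hf0 u a ha
    rw [h1]
    calc ‖A a‖ ≤ C * ‖S a‖ := hb a
      _ = C * ‖u‖ := by rw [ha]; rfl
  let f : LinearMap.range (S : H →ₗ[ℝ] H) →L[ℝ] H := fl.mkContinuous C hbd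
  let e : LinearMap.range (S : H →ₗ[ℝ] H) →L[ℝ] K :=
    (Submodule.inclusion (Submodule.le_topologicalClosure _)).mkContinuous 1 (fun x => by
      rw [one_mul]
      rfl)
  have he_coe : ∀ u : LinearMap.range (S : H →ₗ[ℝ] H), ((e u : K) : H) = (u : H) := fun u => rfl
  have h_dense : DenseRange e := by
    refine Topology.IsInducing.subtypeVal.dense_iff.2 fun x => ?_
    have hx : (x : H) ∈ closure ((LinearMap.range (S : H →ₗ[ℝ] H) : Submodule ℝ H) : Set H) := by
      rw [← Submodule.topologicalClosure_coe]; exact x.2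
    convert hx using 2
    rw [← Set.range_comp]
    refine Set.ext fun y => ⟨?_, ?_⟩
    · rintro ⟨u, rfl⟩
      exact u.2
    · intro hy
      exact ⟨⟨y, hy⟩, rfl⟩
  have h_isom : Isometry e := AddMonoidHomClass.isometry_of_norm e (fun u => rfl)
  have h_e : IsUniformInducing e := h_isom.isUniformInducing
  set G0 : K →L[ℝ] H := f.extend e with hG0def
  have hG0e : ∀ u : LinearMap.range (S : H →ₗ[ℝ] H), G0 (e u) = f u := fun u =>
    ContinuousLinearMap.extend_eq f h_dense h_e u
  refine ⟨G0.comp (K.orthogonalProjectionOnto), ?_, ?_, ?_⟩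
  · intro ζ
    have hmemK : S ζ ∈ K :=
      Submodule.le_topologicalClosure _ (LinearMap.mem_range_self (S : H →ₗ[ℝ] H) ζ)
    have hproj : K.orthogonalProjectionOnto (S ζ) = (⟨S ζ, hmemK⟩ : K) :=
      Submodule.orthogonalProjectionOnto_mem_subspace_eq_self (⟨S ζ, hmemK⟩ : K)
    have hee : (⟨S ζ, hmemK⟩ : K) = e ⟨S ζ, LinearMap.mem_range_self (S : H →ₗ[ℝ] H) ζ⟩ :=
      Subtype.ext rfl
    show G0 (K.orthogonalProjectionOnto (S ζ)) = A ζ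
    rw [hproj, hee, hG0e]
    exact hf0 ⟨S ζ, LinearMap.mem_range_self (S : H →ₗ[ℝ] H) ζ⟩ ζ rfl
  · intro u hu
    have huo : u ∈ Kᗮ :=
      (Submodule.mem_orthogonal K u).mpr fun v hv => baker_orth_closure S u hu hv
    show G0 (K.orthogonalProjectionOnto u) = 0
    rw [Submodule.orthogonalProjectionOnto_apply_of_mem_orthogonal huo, map_zero]
  · intro P hP hAP u
    show G0 (K.orthogonalProjectionOnto u) ∈ P
    have hall : ∀ v : K, G0 v ∈ P := by
      intro v
      refine h_dense.induction_on v ?_ ?_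
      · exact hP.preimage G0.continuous
      · intro a
        rw [hG0e]
        obtain ⟨ζ, hζ⟩ := hmem a
        rw [show f a = A ζ from hf0 a ζ hζ]
        exact hAP ζ
    exact hall _

/-- Abstract form of Baker's lemma. -/
lemma baker_abstract (Sx Sz Cxz : H →L[ℝ] H)
    (hSxsa : ∀ x y : H, ⟪Sx x, y⟫ = ⟪x, Sx y⟫)
    (hSzsa : ∀ x y : H, ⟪Sz x, y⟫ = ⟪x, Sz y⟫)
    (hkey : ∀ ζ η : H, |⟪Cxz ζ, η⟫| ≤ ‖Sx ζ‖ * ‖Sz η‖) :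
    ∃! R : H →L[ℝ] H,
      Sz.comp (R.comp Sx) = Cxz ∧
      (∀ ζ : H, (∀ w : H, ⟪Sx w, ζ⟫ = 0) → R ζ = 0) ∧
      (∀ η : H, (∀ w : H, ⟪Sz w, η⟫ = 0) →
        ContinuousLinearMap.adjoint R η = 0) := by
  set Kz := (LinearMap.range (Sz : H →ₗ[ℝ] H)).topologicalClosure with hKzdef
  set Kx := (LinearMap.range (Sx : H →ₗ[ℝ] H)).topologicalClosure with hKxdef
  haveI : CompleteSpace Kx := (LinearMap.range (Sx : H →ₗ[ℝ] H)).isClosed_topologicalClosure.completeSpace_coe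
  -- bound for the adjoint of Cxz
  have hCadj : ∀ η : H, ‖ContinuousLinearMap.adjoint Cxz η‖ ≤ ‖Sx‖ * ‖Sz η‖ := by
    intro η
    set t := ContinuousLinearMap.adjoint Cxz η with ht
    have h1 : ⟪t, t⟫ = ⟪η, Cxz t⟫ := ContinuousLinearMap.adjoint_inner_left Cxz t η
    have h2 : ‖t‖ * ‖t‖ ≤ (‖Sx‖ * ‖t‖) * ‖Sz η‖ := by
      have hk := hkey t η
      have h4 : ‖Sx t‖ ≤ ‖Sx‖ * ‖t‖ := Sx.le_opNorm t
      calc ‖t‖ * ‖t‖ = ⟪t, t⟫ := (real_inner_self_eq_norm_mul_norm t).symm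
        _ = ⟪Cxz t, η⟫ := by rw [h1, real_inner_comm]
        _ ≤ |⟪Cxz t, η⟫| := le_abs_self _
        _ ≤ ‖Sx t‖ * ‖Sz η‖ := hk
        _ ≤ (‖Sx‖ * ‖t‖) * ‖Sz η‖ :=
            mul_le_mul_of_nonneg_right h4 (norm_nonneg _)
    nlinarith [norm_nonneg t, norm_nonneg (Sz η), norm_nonneg Sx,
      mul_nonneg (norm_nonneg Sx) (norm_nonneg (Sz η))]
  obtain ⟨D, hD1, hD2, hD3⟩ :=
    baker_extend Sz (ContinuousLinearMap.adjoint Cxz) ‖Sx‖ (norm_nonneg _) hCadj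
  set A := ContinuousLinearMap.adjoint D with hAdef
  have hA1 : ∀ ζ η : H, ⟪A ζ, Sz η⟫ = ⟪Cxz ζ, η⟫ := by
    intro ζ η
    calc ⟪A ζ, Sz η⟫ = ⟪ζ, D (Sz η)⟫ :=
        ContinuousLinearMap.adjoint_inner_left D (Sz η) ζ
      _ = ⟪ζ, ContinuousLinearMap.adjoint Cxz η⟫ := by rw [hD1]
      _ = ⟪Cxz ζ, η⟫ := ContinuousLinearMap.adjoint_inner_right Cxz ζ η
  have hA2 : ∀ ζ : H, A ζ ∈ Kz := by
    intro ζ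
    have hmem : A ζ ∈ ((LinearMap.range (Sz : H →ₗ[ℝ] H))ᗮ)ᗮ := by
      rw [Submodule.mem_orthogonal]
      intro v hv
      have hDv : D v = 0 := hD2 v (fun w =>
        (Submodule.mem_orthogonal _ _).mp hv (Sz w) (LinearMap.mem_range_self (Sz : H →ₗ[ℝ] H) w))
      have h5 : ⟪A ζ, v⟫ = ⟪ζ, D v⟫ := ContinuousLinearMap.adjoint_inner_left D v ζ
      rw [real_inner_comm, h5, hDv, inner_zero_right]
    rwa [Submodule.orthogonal_orthogonal_eq_closure] at hmem
  have hA3 : ∀ ζ : H, ‖A ζ‖ ≤ ‖Sx ζ‖ := by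
    intro ζ
    have hcl : ∀ u ∈ Kz, ⟪A ζ, u⟫ ≤ ‖Sx ζ‖ * ‖u‖ := by
      intro u hu
      have hsub : ((LinearMap.range (Sz : H →ₗ[ℝ] H) : Submodule ℝ H) : Set H) ⊆
          {v : H | ⟪A ζ, v⟫ ≤ ‖Sx ζ‖ * ‖v‖} := by
        intro v hv
        obtain ⟨η, rfl⟩ := LinearMap.mem_range.mp hv
        calc ⟪A ζ, Sz η⟫ = ⟪Cxz ζ, η⟫ := hA1 ζ η
          _ ≤ |⟪Cxz ζ, η⟫| := le_abs_self _
          _ ≤ ‖Sx ζ‖ * ‖Sz η‖ := hkey ζ η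
      have hclosed : IsClosed {v : H | ⟪A ζ, v⟫ ≤ ‖Sx ζ‖ * ‖v‖} :=
        isClosed_le (continuous_const.inner continuous_id)
          (continuous_const.mul continuous_norm)
      have hu' : u ∈ closure ((LinearMap.range (Sz : H →ₗ[ℝ] H) : Submodule ℝ H) : Set H) := by
        rw [← Submodule.topologicalClosure_coe]; exact hu
      exact closure_minimal hsub hclosed hu'
    have h2 := hcl (A ζ) (hA2 ζ)
    rw [real_inner_self_eq_norm_mul_norm] at h2
    nlinarith [norm_nonneg (A ζ), norm_nonneg (Sx ζ)]
  obtain ⟨R, hR1, hR2, hR3'⟩ :=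
    baker_extend Sx A 1 zero_le_one (fun ζ => by rw [one_mul]; exact hA3 ζ)
  have hR3 : ∀ u : H, R u ∈ Kz :=
    hR3' Kz (LinearMap.range (Sz : H →ₗ[ℝ] H)).isClosed_topologicalClosure hA2
  have prop1 : Sz.comp (R.comp Sx) = Cxz := by
    ext ζ
    simp only [ContinuousLinearMap.comp_apply]
    apply ext_inner_right ℝ
    intro v
    rw [hR1 ζ, hSzsa (A ζ) v]
    exact hA1 ζ v
  have prop3 : ∀ η : H, (∀ w : H, ⟪Sz w, η⟫ = 0) →
      ContinuousLinearMap.adjoint R η = 0 := by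
    intro η hη
    apply ext_inner_right ℝ
    intro u
    rw [inner_zero_left, ContinuousLinearMap.adjoint_inner_left, real_inner_comm]
    exact baker_orth_closure Sz η hη (hR3 u)
  refine ⟨R, ⟨prop1, hR2, prop3⟩, ?_⟩
  rintro R' ⟨h1, h2, h3⟩
  -- both operators map into Kz
  have memKz : ∀ (R₀ : H →L[ℝ] H),
      (∀ η : H, (∀ w : H, ⟪Sz w, η⟫ = 0) → ContinuousLinearMap.adjoint R₀ η = 0) →
      ∀ u : H, R₀ u ∈ Kz := by
    intro R₀ h3' u
    have hmem : R₀ u ∈ ((LinearMap.range (Sz : H →ₗ[ℝ] H))ᗮ)ᗮ := by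
      rw [Submodule.mem_orthogonal]
      intro v hv
      have hadj : ContinuousLinearMap.adjoint R₀ v = 0 := h3' v (fun w =>
        (Submodule.mem_orthogonal _ _).mp hv (Sz w) (LinearMap.mem_range_self (Sz : H →ₗ[ℝ] H) w))
      rw [real_inner_comm, ← ContinuousLinearMap.adjoint_inner_right R₀ u v, hadj,
        inner_zero_right]
    rwa [Submodule.orthogonal_orthogonal_eq_closure] at hmem
  have agree : ∀ ζ : H, R' (Sx ζ) = R (Sx ζ) := by
    intro ζ
    have hm1 : R' (Sx ζ) ∈ Kz := memKz R' h3 _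
    have hm2 : R (Sx ζ) ∈ Kz := hR3 _
    set d := R' (Sx ζ) - R (Sx ζ) with hd
    have hdK : d ∈ Kz := Kz.sub_mem hm1 hm2
    have hSzd : Sz d = 0 := by
      have e1 : Sz (R' (Sx ζ)) = Cxz ζ := by
        have := congrArg (fun T : H →L[ℝ] H => T ζ) h1
        simpa using this
      have e2 : Sz (R (Sx ζ)) = Cxz ζ := by
        have := congrArg (fun T : H →L[ℝ] H => T ζ) prop1
        simpa using this
      rw [hd, map_sub, e1, e2, sub_self]
    have hdo : ∀ w : H, ⟪Sz w, d⟫ = 0 := by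
      intro w
      rw [hSzsa w d, hSzd, inner_zero_right]
    have hdd : ⟪d, d⟫ = 0 := baker_orth_closure Sz d hdo hdK
    have hd0 : d = 0 := inner_self_eq_zero.mp hdd
    exact sub_eq_zero.mp hd0
  have agreeK : ∀ u ∈ Kx, R' u = R u := by
    intro u hu
    have hsub : ((LinearMap.range (Sx : H →ₗ[ℝ] H) : Submodule ℝ H) : Set H) ⊆
        {v : H | R' v = R v} := by
      intro v hv
      obtain ⟨ζ, rfl⟩ := LinearMap.mem_range.mp hv
      exact agree ζ
    have hclosed : IsClosed {v : H | R' v = R v} := isClosed_eq R'.continuous R.continuous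
    have hu' : u ∈ closure ((LinearMap.range (Sx : H →ₗ[ℝ] H) : Submodule ℝ H) : Set H) := by
      rw [← Submodule.topologicalClosure_coe]; exact hu
    exact closure_minimal hsub hclosed hu'
  ext u
  have hq : (u - (Kx.orthogonalProjectionOnto u : H)) ∈ Kxᗮ :=
    Submodule.sub_starProjection_mem_orthogonal u
  have hzero : ∀ (R₀ : H →L[ℝ] H),
      (∀ ζ : H, (∀ w : H, ⟪Sx w, ζ⟫ = 0) → R₀ ζ = 0) →
      R₀ u = R₀ (Kx.orthogonalProjectionOnto u : H) := by
    intro R₀ h2'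
    have h0 : R₀ (u - (Kx.orthogonalProjectionOnto u : H)) = 0 := h2' _ (fun w =>
      (Submodule.mem_orthogonal _ _).mp hq (Sx w)
        (Submodule.le_topologicalClosure _ (LinearMap.mem_range_self (Sx : H →ₗ[ℝ] H) w)))
    rw [map_sub, sub_eq_zero] at h0
    exact h0
  rw [hzero R' h2, hzero R hR2, agreeK _ (Kx.orthogonalProjectionOnto u).2]

end AuxHilbert

section AuxMeasure

variable {Ω : Type*} [MeasurableSpace Ω] (μ : Measure Ω)
variable {H : Type*} [NormedAddCommGroup H] [InnerProductSpace ℝ H]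

lemma baker_integrable {f g : Ω → H} (hf : StronglyMeasurable f) (hg : StronglyMeasurable g)
    (hf2 : Integrable (fun ω => ‖f ω‖ ^ 2) μ) (hg2 : Integrable (fun ω => ‖g ω‖ ^ 2) μ)
    (ζ : H) : Integrable (fun ω => (⟪f ω, ζ⟫) • g ω) μ := by
  have hsm : AEStronglyMeasurable (fun ω => (⟪f ω, ζ⟫) • g ω) μ :=
    ((hf.inner stronglyMeasurable_const).smul hg).aestronglyMeasurable
  refine Integrable.mono' ((hf2.add hg2).const_mul (‖ζ‖ / 2)) hsm ?_
  filter_upwards with ω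
  show ‖(⟪f ω, ζ⟫) • g ω‖ ≤ ‖ζ‖ / 2 * (‖f ω‖ ^ 2 + ‖g ω‖ ^ 2)
  rw [norm_smul]
  have h1 : ‖⟪f ω, ζ⟫‖ ≤ ‖f ω‖ * ‖ζ‖ := norm_inner_le_norm _ _
  calc ‖⟪f ω, ζ⟫‖ * ‖g ω‖ ≤ (‖f ω‖ * ‖ζ‖) * ‖g ω‖ :=
        mul_le_mul_of_nonneg_right h1 (norm_nonneg _)
    _ ≤ ‖ζ‖ / 2 * (‖f ω‖ ^ 2 + ‖g ω‖ ^ 2) := by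
        nlinarith [mul_nonneg (norm_nonneg ζ) (sq_nonneg (‖f ω‖ - ‖g ω‖))]

lemma baker_integrable_mul {f g : Ω → H} (hf : StronglyMeasurable f)
    (hg : StronglyMeasurable g)
    (hf2 : Integrable (fun ω => ‖f ω‖ ^ 2) μ) (hg2 : Integrable (fun ω => ‖g ω‖ ^ 2) μ)
    (ζ η : H) : Integrable (fun ω => (⟪f ω, ζ⟫) * (⟪g ω, η⟫)) μ := by
  have hsm : AEStronglyMeasurable (fun ω => (⟪f ω, ζ⟫) * (⟪g ω, η⟫)) μ :=
    ((hf.inner stronglyMeasurable_const).mul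
      (hg.inner stronglyMeasurable_const)).aestronglyMeasurable
  refine Integrable.mono' ((hf2.add hg2).const_mul (‖ζ‖ * ‖η‖ / 2)) hsm ?_
  filter_upwards with ω
  show ‖(⟪f ω, ζ⟫) * (⟪g ω, η⟫)‖ ≤ ‖ζ‖ * ‖η‖ / 2 * (‖f ω‖ ^ 2 + ‖g ω‖ ^ 2)
  rw [norm_mul]
  have h1 : ‖⟪f ω, ζ⟫‖ ≤ ‖f ω‖ * ‖ζ‖ := norm_inner_le_norm _ _
  have h2 : ‖⟪g ω, η⟫‖ ≤ ‖g ω‖ * ‖η‖ := norm_inner_le_norm _ _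
  have h3 : ‖⟪f ω, ζ⟫‖ * ‖⟪g ω, η⟫‖ ≤ (‖f ω‖ * ‖ζ‖) * (‖g ω‖ * ‖η‖) :=
    mul_le_mul h1 h2 (norm_nonneg _) (mul_nonneg (norm_nonneg _) (norm_nonneg _))
  calc ‖⟪f ω, ζ⟫‖ * ‖⟪g ω, η⟫‖ ≤ (‖f ω‖ * ‖ζ‖) * (‖g ω‖ * ‖η‖) := h3
    _ ≤ ‖ζ‖ * ‖η‖ / 2 * (‖f ω‖ ^ 2 + ‖g ω‖ ^ 2) := by
        nlinarith [mul_nonneg (mul_nonneg (norm_nonneg ζ) (norm_nonneg η))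
          (sq_nonneg (‖f ω‖ - ‖g ω‖))]

lemma baker_inner_integral [CompleteSpace H] {f g : Ω → H}
    (hf : StronglyMeasurable f) (hg : StronglyMeasurable g)
    (hf2 : Integrable (fun ω => ‖f ω‖ ^ 2) μ) (hg2 : Integrable (fun ω => ‖g ω‖ ^ 2) μ)
    (ζ η : H) :
    ⟪∫ ω, (⟪f ω, ζ⟫) • g ω ∂μ, η⟫ = ∫ ω, (⟪f ω, ζ⟫) * (⟪g ω, η⟫) ∂μ := by
  rw [real_inner_comm, ← integral_inner (baker_integrable μ hf hg hf2 hg2 ζ) η]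
  refine integral_congr_ae (Filter.Eventually.of_forall fun ω => ?_)
  show ⟪η, (⟪f ω, ζ⟫) • g ω⟫ = (⟪f ω, ζ⟫) * (⟪g ω, η⟫)
  rw [real_inner_smul_right, real_inner_comm (g ω) η]

lemma baker_cs {f g : Ω → ℝ}
    (hf2 : Integrable (fun ω => f ω * f ω) μ) (hg2 : Integrable (fun ω => g ω * g ω) μ)
    (hfg : Integrable (fun ω => f ω * g ω) μ) :
    (∫ ω, f ω * g ω ∂μ) ^ 2 ≤ (∫ ω, f ω * f ω ∂μ) * (∫ ω, g ω * g ω ∂μ) := by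
  set a := ∫ ω, f ω * f ω ∂μ with ha_def
  set b := ∫ ω, g ω * g ω ∂μ with hb_def
  set c := ∫ ω, f ω * g ω ∂μ with hc_def
  have ha : 0 ≤ a := integral_nonneg fun ω => mul_self_nonneg _
  have hb : 0 ≤ b := integral_nonneg fun ω => mul_self_nonneg _
  rcases eq_or_lt_of_le ha with h0 | hpos
  · -- a = 0 : then f = 0 a.e. so c = 0
    have hf0 : (fun ω => f ω * f ω) =ᵐ[μ] 0 :=
      (integral_eq_zero_iff_of_nonneg (fun ω => mul_self_nonneg _) hf2).mp h0.symm
    have hc0 : c = 0 := by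
      rw [hc_def]
      refine integral_eq_zero_of_ae ?_
      filter_upwards [hf0] with ω hω
      have hfω : f ω = 0 := by
        have : f ω * f ω = 0 := hω
        exact mul_self_eq_zero.mp this
      simp [hfω]
    rw [hc0]
    simpa using mul_nonneg ha hb
  · have hint : Integrable (fun ω => (c * f ω - a * g ω) ^ 2) μ := by
      have hrw : (fun ω => (c * f ω - a * g ω) ^ 2) =
          fun ω => c ^ 2 * (f ω * f ω) - 2 * a * c * (f ω * g ω) + a ^ 2 * (g ω * g ω) := by
        funext ω; ring
      rw [hrw]
      exact ((hf2.const_mul _).sub (hfg.const_mul _)).add (hg2.const_mul _)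
    have hnn : 0 ≤ ∫ ω, (c * f ω - a * g ω) ^ 2 ∂μ :=
      integral_nonneg fun ω => sq_nonneg _
    have hval : ∫ ω, (c * f ω - a * g ω) ^ 2 ∂μ =
        c ^ 2 * a - 2 * a * c * c + a ^ 2 * b := by
      have hrw : (fun ω => (c * f ω - a * g ω) ^ 2) =
          fun ω => c ^ 2 * (f ω * f ω) - 2 * a * c * (f ω * g ω) + a ^ 2 * (g ω * g ω) := by
        funext ω; ring
      have i1 : Integrable (fun ω => c ^ 2 * (f ω * f ω) - 2 * a * c * (f ω * g ω)) μ :=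
        (hf2.const_mul _).sub (hfg.const_mul _)
      have i2 : Integrable (fun ω => a ^ 2 * (g ω * g ω)) μ := hg2.const_mul _
      have i3 : Integrable (fun ω => c ^ 2 * (f ω * f ω)) μ := hf2.const_mul _
      have i4 : Integrable (fun ω => 2 * a * c * (f ω * g ω)) μ := hfg.const_mul _
      rw [hrw, integral_add i1 i2, integral_sub i3 i4, integral_const_mul,
        integral_const_mul, integral_const_mul]
    rw [hval] at hnn
    nlinarith [hnn, hpos]

end AuxMeasure

/-- Baker's lemma: the cross-covariance operator of two centered square-integrable
Hilbert-space-valued random variables factorizes as `C_xz = C_zz^{1/2} R C_xx^{1/2}` for a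
unique bounded operator `R` (the correlation operator) vanishing on the orthogonal
complement of the closure of the range of `C_xx^{1/2}` and whose adjoint vanishes on the
orthogonal complement of the closure of the range of `C_zz^{1/2}`. -/
theorem baker_correlation_operator
    {H : Type*} [NormedAddCommGroup H] [InnerProductSpace ℝ H] [CompleteSpace H]
    [TopologicalSpace.SeparableSpace H]
    {Ω : Type*} [MeasurableSpace Ω] (μ : Measure Ω) [IsProbabilityMeasure μ]
    (X Z : Ω → H)
    (hX : StronglyMeasurable X) (hZ : StronglyMeasurable Z)
    (hX2 : Integrable (fun ω => ‖X ω‖ ^ 2) μ)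
    (hZ2 : Integrable (fun ω => ‖Z ω‖ ^ 2) μ)
    (hXmean : (∫ ω, X ω ∂μ) = 0) (hZmean : (∫ ω, Z ω ∂μ) = 0)
    (Cxx Czz Cxz : H →L[ℝ] H)
    (hCxx : ∀ ζ : H, Cxx ζ = ∫ ω, (inner ℝ (X ω) ζ : ℝ) • X ω ∂μ)
    (hCzz : ∀ ζ : H, Czz ζ = ∫ ω, (inner ℝ (Z ω) ζ : ℝ) • Z ω ∂μ)
    (hCxz : ∀ ζ : H, Cxz ζ = ∫ ω, (inner ℝ (X ω) ζ : ℝ) • Z ω ∂μ)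
    -- `Sx` and `Sz` are the (unique) nonnegative self-adjoint square roots of
    -- `Cxx` and `Czz`, respectively.
    (Sx Sz : H →L[ℝ] H)
    (hSxsa : ∀ x y : H, (inner ℝ (Sx x) y : ℝ) = inner ℝ x (Sx y))
    (hSxpos : ∀ x : H, 0 ≤ (inner ℝ (Sx x) x : ℝ))
    (hSxsq : Sx.comp Sx = Cxx)
    (hSzsa : ∀ x y : H, (inner ℝ (Sz x) y : ℝ) = inner ℝ x (Sz y))
    (hSzpos : ∀ x : H, 0 ≤ (inner ℝ (Sz x) x : ℝ))
    (hSzsq : Sz.comp Sz = Czz) :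
    ∃! R : H →L[ℝ] H,
      Sz.comp (R.comp Sx) = Cxz ∧
      (∀ ζ : H, (∀ w : H, (inner ℝ (Sx w) ζ : ℝ) = 0) → R ζ = 0) ∧
      (∀ η : H, (∀ w : H, (inner ℝ (Sz w) η : ℝ) = 0) →
        ContinuousLinearMap.adjoint R η = 0) := by
  have hCxzi : ∀ ζ η : H, ⟪Cxz ζ, η⟫ = ∫ ω, (⟪X ω, ζ⟫) * (⟪Z ω, η⟫) ∂μ := by
    intro ζ η
    rw [hCxz ζ]
    exact baker_inner_integral μ hX hZ hX2 hZ2 ζ η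
  have hCxxi : ∀ ζ η : H, ⟪Cxx ζ, η⟫ = ∫ ω, (⟪X ω, ζ⟫) * (⟪X ω, η⟫) ∂μ := by
    intro ζ η
    rw [hCxx ζ]
    exact baker_inner_integral μ hX hX hX2 hX2 ζ η
  have hCzzi : ∀ ζ η : H, ⟪Czz ζ, η⟫ = ∫ ω, (⟪Z ω, ζ⟫) * (⟪Z ω, η⟫) ∂μ := by
    intro ζ η
    rw [hCzz ζ]
    exact baker_inner_integral μ hZ hZ hZ2 hZ2 ζ η
  have hSxn : ∀ ζ : H, ‖Sx ζ‖ * ‖Sx ζ‖ = ∫ ω, (⟪X ω, ζ⟫) * (⟪X ω, ζ⟫) ∂μ := by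
    intro ζ
    calc ‖Sx ζ‖ * ‖Sx ζ‖ = ⟪Sx ζ, Sx ζ⟫ := (real_inner_self_eq_norm_mul_norm _).symm
      _ = ⟪Sx (Sx ζ), ζ⟫ := (hSxsa (Sx ζ) ζ).symm
      _ = ⟪Cxx ζ, ζ⟫ := by rw [← ContinuousLinearMap.comp_apply, hSxsq]
      _ = ∫ ω, (⟪X ω, ζ⟫) * (⟪X ω, ζ⟫) ∂μ := hCxxi ζ ζ
  have hSzn : ∀ η : H, ‖Sz η‖ * ‖Sz η‖ = ∫ ω, (⟪Z ω, η⟫) * (⟪Z ω, η⟫) ∂μ := by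
    intro η
    calc ‖Sz η‖ * ‖Sz η‖ = ⟪Sz η, Sz η⟫ := (real_inner_self_eq_norm_mul_norm _).symm
      _ = ⟪Sz (Sz η), η⟫ := (hSzsa (Sz η) η).symm
      _ = ⟪Czz η, η⟫ := by rw [← ContinuousLinearMap.comp_apply, hSzsq]
      _ = ∫ ω, (⟪Z ω, η⟫) * (⟪Z ω, η⟫) ∂μ := hCzzi η η
  have hkey : ∀ ζ η : H, |⟪Cxz ζ, η⟫| ≤ ‖Sx ζ‖ * ‖Sz η‖ := by
    intro ζ η
    have hcs := baker_cs μ (baker_integrable_mul μ hX hX hX2 hX2 ζ ζ)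
      (baker_integrable_mul μ hZ hZ hZ2 hZ2 η η)
      (baker_integrable_mul μ hX hZ hX2 hZ2 ζ η)
    rw [← hCxzi ζ η, ← hSxn ζ, ← hSzn η] at hcs
    nlinarith [abs_nonneg (⟪Cxz ζ, η⟫), sq_abs (⟪Cxz ζ, η⟫),
      norm_nonneg (Sx ζ), norm_nonneg (Sz η),
      mul_nonneg (norm_nonneg (Sx ζ)) (norm_nonneg (Sz η))]
  exact baker_abstract Sx Sz Cxz hSxsa hSzsa hkey
end

section
/- Let H be a separable real Hilbert space, T : H → H a bounded self-adjoint linear operator, and (f_ℓ)_{ℓ≥1} a Hilbert (orthonormal) basis of H with T f_ℓ = θ_ℓ f_ℓ for real numbers θ_ℓ. Let S : H → H be a bounded linear operator and f̂ ∈ H a unit vector with S f̂ = θ̂ f̂ for some real θ̂. Fix an index j, suppose θ̂ ≠ θ_ℓ for every ℓ ≠ j, and set f_jˢ = f_j if ⟨f̂, f_j⟩ ≥ 0 and f_jˢ = −f_j otherwise. Then ‖f̂ − f_jˢ‖² ≤ 4·Σ_{ℓ≠j} (θ̂ − θ_ℓ)^{−2}·⟨(S − T) f̂, f_ℓ⟩²,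 where the sum on the right-hand side is taken in [0, ∞]. -/
/-- Quantitative eigenvector perturbation bound: the squared distance of a unit
eigenvector `f̂` of `S` to the sign-aligned eigenvector `f_jˢ` of the self-adjoint
operator `T` is at most `4 Σ_{ℓ≠j} (θ̂ − θ_ℓ)^{−2} ⟨(S − T) f̂, f_ℓ⟩²`, the right-hand
side being a sum in `[0, ∞]`. -/
theorem eigenvector_perturbation_bound
    {H : Type*} [NormedAddCommGroup H] [InnerProductSpace ℝ H] [CompleteSpace H]
    (T S : H →L[ℝ] H)
    (hTsa : ∀ x y : H, (inner ℝ (T x) y : ℝ) = inner ℝ x (T y))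
    (f : HilbertBasis ℕ ℝ H) (θ : ℕ → ℝ)
    (heig : ∀ ℓ : ℕ, T (f ℓ) = θ ℓ • (f ℓ : H))
    (fhat : H) (hnorm : ‖fhat‖ = 1)
    (θhat : ℝ) (hS : S fhat = θhat • fhat)
    (j : ℕ) (hgap : ∀ ℓ : ℕ, ℓ ≠ j → θhat ≠ θ ℓ) :
    ENNReal.ofReal
        (‖fhat - (if 0 ≤ (inner ℝ fhat (f j) : ℝ) then (f j : H) else -(f j : H))‖ ^ 2)
      ≤ 4 * ∑' ℓ : ℕ,
          (if ℓ ≠ j then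
            ENNReal.ofReal
              (((θhat - θ ℓ) ^ 2)⁻¹ * (inner ℝ ((S - T) fhat) (f ℓ) : ℝ) ^ 2)
          else 0) := by
  set c : ℕ → ℝ := fun ℓ => (inner ℝ fhat (f ℓ) : ℝ) with hc
  -- key coefficient identity
  have hkey : ∀ ℓ : ℕ, (inner ℝ ((S - T) fhat) (f ℓ) : ℝ) = (θhat - θ ℓ) * c ℓ := by
    intro ℓ
    have h1 : (inner ℝ (S fhat) (f ℓ) : ℝ) = θhat * c ℓ := by
      rw [hS, real_inner_smul_left, hc]
    have h2 : (inner ℝ (T fhat) (f ℓ) : ℝ) = θ ℓ * c ℓ := by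
      rw [hTsa, heig, real_inner_smul_right, hc]
    simp only [ContinuousLinearMap.sub_apply, inner_sub_left, h1, h2]
    ring
  -- Parseval
  have hsum : Summable (fun ℓ => c ℓ ^ 2) := by
    have := f.summable_inner_mul_inner fhat fhat
    simpa [hc, real_inner_comm, sq] using this
  have hpars : ∑' ℓ, c ℓ ^ 2 = 1 := by
    have := f.tsum_inner_mul_inner fhat fhat
    have h2 : (inner ℝ fhat fhat : ℝ) = 1 := by
      rw [real_inner_self_eq_norm_sq, hnorm]; norm_num
    calc ∑' ℓ, c ℓ ^ 2 = ∑' ℓ, (inner ℝ fhat (f ℓ) : ℝ) * (inner ℝ (f ℓ : H) fhat : ℝ) := by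
          refine tsum_congr fun ℓ => ?_
          simp [hc, sq, real_inner_comm]
      _ = 1 := by rw [this, h2]
  -- rewrite summands
  have hsummand : ∀ ℓ : ℕ,
      (if ℓ ≠ j then
        ENNReal.ofReal (((θhat - θ ℓ) ^ 2)⁻¹ * (inner ℝ ((S - T) fhat) (f ℓ) : ℝ) ^ 2)
      else 0) = ENNReal.ofReal (if ℓ = j then 0 else c ℓ ^ 2) := by
    intro ℓ
    by_cases h : ℓ = j
    · simp [h]
    · have hne : θhat - θ ℓ ≠ 0 := sub_ne_zero.2 (hgap ℓ h)
      rw [if_pos h, if_neg h, hkey ℓ]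
      congr 1
      field_simp
  -- sum of the g's
  have hg : Summable (fun ℓ => if ℓ = j then 0 else c ℓ ^ 2) := by
    apply Summable.of_nonneg_of_le (fun ℓ => by positivity)
      (fun ℓ => by by_cases h : ℓ = j <;> simp [h, sq_nonneg]) hsum
  have hgsum : ∑' ℓ, (if ℓ = j then 0 else c ℓ ^ 2) = 1 - c j ^ 2 := by
    have := Summable.tsum_eq_add_tsum_ite hsum j
    rw [hpars] at this
    linarith [this]
  have hRHS : ∑' ℓ : ℕ,
      (if ℓ ≠ j then
        ENNReal.ofReal (((θhat - θ ℓ) ^ 2)⁻¹ * (inner ℝ ((S - T) fhat) (f ℓ) : ℝ) ^ 2)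
      else 0) = ENNReal.ofReal (1 - c j ^ 2) := by
    rw [tsum_congr hsummand, ← hgsum]
    exact (ENNReal.ofReal_tsum_of_nonneg
      (fun ℓ => by by_cases h : ℓ = j <;> simp [h, sq_nonneg]) hg).symm
  rw [hRHS]
  -- LHS computation
  have hcj : |c j| ≤ 1 := by
    have := abs_real_inner_le_norm fhat (f j : H)
    rw [hnorm, f.orthonormal.1 j] at this
    simpa [hc] using this
  have hnj : ‖(f j : H)‖ = 1 := f.orthonormal.1 j
  have hLHS : ‖fhat - (if 0 ≤ (inner ℝ fhat (f j) : ℝ) then (f j : H) else -(f j : H))‖ ^ 2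
      = 2 - 2 * |c j| := by
    by_cases h : 0 ≤ (inner ℝ fhat (f j) : ℝ)
    · rw [if_pos h, norm_sub_sq_real, hnorm, hnj, abs_of_nonneg h]; ring
    · rw [if_neg h, norm_sub_sq_real, hnorm, norm_neg, hnj, inner_neg_right,
        abs_of_neg (lt_of_not_ge h)]
      ring
  rw [hLHS]
  have h4 : (4 : ENNReal) * ENNReal.ofReal (1 - c j ^ 2) = ENNReal.ofReal (4 * (1 - c j ^ 2)) := by
    rw [ENNReal.ofReal_mul (show (0:ℝ) ≤ 4 by norm_num)]
    norm_num
  rw [h4]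
  apply ENNReal.ofReal_le_ofReal
  have habs : c j ^ 2 = |c j| ^ 2 := (sq_abs _).symm
  nlinarith [abs_nonneg (c j)]
end
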